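/- arXiv:2011.11213 — 8 statements merged into one kernel-verified Lean document; each statement's English description precedes it below -/
import Mathlib

section
/- Let (h_t)_{t∈ℝ} be a measurable measure-preserving flow on a probability space (M, μ), let f ∈ L²(M, μ) be a real-valued function, and let B > 0, β > 0, S > 0 be constants with ‖f‖₂ ≤ S. Suppose that |⟨f ∘ h_t, f⟩_{L²(μ)}| ≤ B S² |t|^{-β} for all t ∈ ℝ with |t| ≥ 1. Then for all t ≥ 1, the ergodic integral I_t f(x) = ∫₀^t f(h_r(x)) dr satisfies ‖I_t f‖₂² ≤ (4 + B) S² t^{2 - β/(1+β)}. -/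
/-!
Squaring the ergodic integral and applying Fubini gives
`‖I_t f‖₂² = ∫∫_{[0,t]²} ⟨f ∘ h_r, f ∘ h_s⟩ dr ds`, and by invariance of `μ` the integrand is the
correlation at time `r - s`. Split the square along the strip `|r - s| ≤ L`: on the strip,
of area at most `2Lt`, Cauchy–Schwarz bounds the correlation by `S²`; off it, the decay hypothesis
bounds it by `B S² L^{-β}`. The choice `L = t^{1/(1+β)}` makes both contributions
`t^{2 - β/(1+β)}`.
-/

open MeasureTheory

section

variable {α β : Type*} [MeasurableSpace α] [MeasurableSpace β]

theorem MeasureTheory.Measure.quasiMeasurePreserving_of_measurePreserving_slices {ν : Measure α}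
    {μ : Measure β} [SFinite μ] {g : α × β → β} (hg : Measurable g)
    (hslice : ∀ a, MeasurePreserving (fun x => g (a, x)) μ μ) :
    Measure.QuasiMeasurePreserving g (ν.prod μ) μ := by
  refine ⟨hg, Measure.AbsolutelyContinuous.mk fun s hs hμs => ?_⟩
  rw [Measure.map_apply hg hs, Measure.prod_apply (hg hs)]
  simp [Set.preimage_preimage,
    fun a => (hslice a).measure_preimage hs.nullMeasurableSet, hμs]

theorem MeasureTheory.MemLp.sq_eLpNorm_two {μ : Measure β} {f : β → ℝ} (hf : MemLp f 2 μ) :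
    eLpNorm f 2 μ ^ 2 = ENNReal.ofReal (∫ x, f x ^ 2 ∂μ) := by
  rw [hf.eLpNorm_eq_integral_rpow_norm two_ne_zero ENNReal.ofNat_ne_top,
    ← ENNReal.ofReal_pow (by positivity), ← Real.rpow_natCast, ← Real.rpow_mul (by positivity)]
  norm_num [Real.norm_eq_abs, sq_abs]

theorem integral_sq_le_sq_of_eLpNorm_le {μ : Measure β} {f : β → ℝ} (hf : MemLp f 2 μ) {S : ℝ}
    (hfS : eLpNorm f 2 μ ≤ ENNReal.ofReal S) : ∫ x, f x ^ 2 ∂μ ≤ S ^ 2 := by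
  have : ENNReal.ofReal (∫ x, f x ^ 2 ∂μ) ≤ ENNReal.ofReal (S ^ 2) := by
    rw [← hf.sq_eLpNorm_two, ← sq_abs S, ENNReal.ofReal_pow (abs_nonneg S)]
    gcongr
    exact hfS.trans (ENNReal.ofReal_le_ofReal (le_abs_self S))
  exact (ENNReal.ofReal_le_ofReal_iff (sq_nonneg S)).mp this

theorem MeasureTheory.MeasurePreserving.integral_comp_of_aestronglyMeasurable {μ : Measure α}
    {ν : Measure β} {g : α → β} (hg : MeasurePreserving g μ ν) {E : Type*} [NormedAddCommGroup E]
    [NormedSpace ℝ E] {F : β → E} (hF : AEStronglyMeasurable F ν) :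
    ∫ x, F (g x) ∂μ = ∫ y, F y ∂ν := by
  rw [← hg.map_eq] at hF ⊢
  exact (integral_map hg.aemeasurable hF).symm

end

section Correlation

variable {M : Type*} [MeasurableSpace M] {μ : Measure M} {f : M → ℝ}

theorem integral_abs_comp_mul_comp_le (hf : MemLp f 2 μ) {g₁ g₂ : M → M}
    (hg₁ : MeasurePreserving g₁ μ μ) (hg₂ : MeasurePreserving g₂ μ μ) :
    ∫ x, |f (g₁ x) * f (g₂ x)| ∂μ ≤ ∫ x, f x ^ 2 ∂μ := by
  have hsq₁ : Integrable (fun x => f (g₁ x) ^ 2) μ :=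
    (hf.comp_measurePreserving hg₁).integrable_sq
  have hsq₂ : Integrable (fun x => f (g₂ x) ^ 2) μ :=
    (hf.comp_measurePreserving hg₂).integrable_sq
  have hsq : AEStronglyMeasurable (fun x => f x ^ 2) μ := hf.1.pow 2
  calc ∫ x, |f (g₁ x) * f (g₂ x)| ∂μ ≤ ∫ x, (f (g₁ x) ^ 2 + f (g₂ x) ^ 2) / 2 ∂μ := by
        refine integral_mono_of_nonneg (ae_of_all _ fun x => abs_nonneg _)
          ((hsq₁.add hsq₂).div_const 2) (ae_of_all _ fun x => ?_)
        dsimp only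
        rw [abs_mul, le_div_iff₀ two_pos, ← sq_abs (f (g₁ x)), ← sq_abs (f (g₂ x))]
        nlinarith [sq_nonneg (|f (g₁ x)| - |f (g₂ x)|)]
    _ = ∫ x, f x ^ 2 ∂μ := by
        rw [integral_div, integral_add hsq₁ hsq₂,
          hg₁.integral_comp_of_aestronglyMeasurable hsq,
          hg₂.integral_comp_of_aestronglyMeasurable hsq]
        ring

variable {h : ℝ → M → M}

theorem integral_flow_mul_flow_eq (h_add : ∀ t s : ℝ, h (t + s) = h t ∘ h s)
    (h_mp : ∀ t : ℝ, MeasurePreserving (h t) μ μ) (hf : AEStronglyMeasurable f μ) (r s : ℝ) :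
    ∫ x, f (h r x) * f (h s x) ∂μ = ∫ x, f (h (r - s) x) * f x ∂μ := by
  have hr : h r = h (r - s) ∘ h s := by rw [← h_add, sub_add_cancel]
  rw [hr]
  exact (h_mp s).integral_comp_of_aestronglyMeasurable
    ((hf.comp_measurePreserving (h_mp (r - s))).mul hf)

theorem abs_integral_flow_mul_flow_le_of_decay (h_add : ∀ t s : ℝ, h (t + s) = h t ∘ h s)
    (h_mp : ∀ t : ℝ, MeasurePreserving (h t) μ μ) (hf : AEStronglyMeasurable f μ) {B β S L : ℝ}
    (hB : 0 ≤ B) (hβ : 0 ≤ β)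
    (hcorr : ∀ t : ℝ, 1 ≤ |t| → |∫ x, f (h t x) * f x ∂μ| ≤ B * S ^ 2 * |t| ^ (-β))
    (hL : 1 ≤ L) {r s : ℝ} (hrs : L ≤ |r - s|) :
    |∫ x, f (h r x) * f (h s x) ∂μ| ≤ B * S ^ 2 * L ^ (-β) := by
  rw [integral_flow_mul_flow_eq h_add h_mp hf]
  refine (hcorr _ (hL.trans hrs)).trans (mul_le_mul_of_nonneg_left ?_ (by positivity))
  exact Real.rpow_le_rpow_of_nonpos (one_pos.trans_le hL) hrs (neg_nonpos.2 hβ)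

end Correlation

theorem measure_prod_abs_sub_le_le {I : Set ℝ} (L : ℝ) :
    (volume.restrict I).prod (volume.restrict I) {p : ℝ × ℝ | |p.1 - p.2| ≤ L}
      ≤ ENNReal.ofReal (2 * L) * volume I := by
  have hs : MeasurableSet {p : ℝ × ℝ | |p.1 - p.2| ≤ L} :=
    measurableSet_le (measurable_fst.sub measurable_snd).abs measurable_const
  rw [Measure.prod_apply hs]
  calc ∫⁻ r, volume.restrict I (Prod.mk r ⁻¹' {p : ℝ × ℝ | |p.1 - p.2| ≤ L}) ∂volume.restrict I
      ≤ ∫⁻ r, ENNReal.ofReal (2 * L) ∂volume.restrict I := by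
        refine lintegral_mono fun r => ?_
        have : Prod.mk r ⁻¹' {p : ℝ × ℝ | |p.1 - p.2| ≤ L} = Set.Icc (r - L) (r + L) := by
          ext s
          simp only [Set.mem_preimage, Set.mem_ofPred_eq, Set.mem_Icc, abs_sub_le_iff]
          constructor <;> rintro ⟨_, _⟩ <;> constructor <;> linarith
        calc _ ≤ volume (Set.Icc (r - L) (r + L)) := by rw [this]; exact Measure.restrict_le_self _
          _ = ENNReal.ofReal (2 * L) := by rw [Real.volume_Icc]; ring_nf
    _ = ENNReal.ofReal (2 * L) * volume I := by
        rw [lintegral_const, Measure.restrict_apply_univ]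

theorem integral_le_of_abs_le_of_abs_le_off {X : Type*} [MeasurableSpace X] {P : Measure X}
    [IsFiniteMeasure P] {c : X → ℝ} (hc : Integrable c P) {s : Set X} (hs : MeasurableSet s)
    {A D : ℝ} (hD : 0 ≤ D) (hA : ∀ p, |c p| ≤ A) (hoff : ∀ p ∉ s, |c p| ≤ D) :
    ∫ p, c p ∂P ≤ D * P.real Set.univ + A * P.real s := by
  have hbound : ∀ p, |c p| ≤ D + s.indicator (fun _ => A) p := by
    intro p
    by_cases hp : p ∈ s
    · rw [Set.indicator_of_mem hp]; linarith [hA p]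
    · rw [Set.indicator_of_notMem hp, add_zero]; exact hoff p hp
  calc ∫ p, c p ∂P ≤ ∫ p, |c p| ∂P := integral_mono hc hc.abs fun p => le_abs_self _
    _ ≤ ∫ p, (D + s.indicator (fun _ => A) p) ∂P :=
        integral_mono hc.abs ((integrable_const D).add ((integrable_const A).indicator hs)) hbound
    _ = D * P.real Set.univ + A * P.real s := by
        rw [integral_add (integrable_const D) ((integrable_const A).indicator hs),
          integral_const, integral_indicator_const A hs, smul_eq_mul, smul_eq_mul, mul_comm,
          mul_comm A]

theorem integral_prod_restrict_Ioc_le {t L A D : ℝ} (ht : 0 ≤ t) (hL : 0 ≤ L) (hD : 0 ≤ D)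
    {c : ℝ × ℝ → ℝ}
    (hc : Integrable c ((volume.restrict (Set.Ioc 0 t)).prod (volume.restrict (Set.Ioc 0 t))))
    (hA : ∀ p, |c p| ≤ A) (hoff : ∀ p : ℝ × ℝ, L < |p.1 - p.2| → |c p| ≤ D) :
    ∫ p, c p ∂(volume.restrict (Set.Ioc 0 t)).prod (volume.restrict (Set.Ioc 0 t))
      ≤ D * t ^ 2 + A * (2 * L * t) := by
  set P := (volume.restrict (Set.Ioc 0 t)).prod (volume.restrict (Set.Ioc 0 t))
  have hstrip : P.real {p : ℝ × ℝ | |p.1 - p.2| ≤ L} ≤ 2 * L * t := by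
    have := measure_prod_abs_sub_le_le (I := Set.Ioc 0 t) L
    rw [Real.volume_Ioc, sub_zero, ← ENNReal.ofReal_mul (by positivity)] at this
    exact ENNReal.toReal_le_of_le_ofReal (by positivity) this
  have huniv : P.real Set.univ = t ^ 2 := by
    rw [Measure.real, ← Set.univ_prod_univ, Measure.prod_prod]
    simp [ht, sq]
  have hA0 : 0 ≤ A := (abs_nonneg _).trans (hA 0)
  calc ∫ p, c p ∂P ≤ D * P.real Set.univ + A * P.real {p : ℝ × ℝ | |p.1 - p.2| ≤ L} :=
        integral_le_of_abs_le_of_abs_le_off hc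
          (measurableSet_le (measurable_fst.sub measurable_snd).abs measurable_const) hD hA
          fun p hp => hoff p (not_le.1 hp)
    _ ≤ D * t ^ 2 + A * (2 * L * t) := by rw [huniv]; gcongr

section Fubini

open Function

variable {α M : Type*} [MeasurableSpace α] [MeasurableSpace M] {ν : Measure α}
  {μ : Measure M} [SFinite μ] {g : α → M → M} {f : M → ℝ}

theorem aestronglyMeasurable_comp_uncurry_prod (hg : Measurable (uncurry g))
    (hg_mp : ∀ a, MeasurePreserving (g a) μ μ) (hf : AEStronglyMeasurable f μ)
    {β : Type*} [MeasurableSpace β] (ρ : Measure β) {φ : β → α} (hφ : Measurable φ) :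
    AEStronglyMeasurable (fun z : β × M => f (g (φ z.1) z.2)) (ρ.prod μ) :=
  hf.comp_quasiMeasurePreserving <|
    Measure.quasiMeasurePreserving_of_measurePreserving_slices
      (hg.comp (hφ.prodMap measurable_id)) fun b => hg_mp (φ b)

theorem sq_integral_eq_integral_prod_mul [SFinite ν] (F : α → ℝ) :
    (∫ a, F a ∂ν) ^ 2 = ∫ p, F p.1 * F p.2 ∂(ν.prod ν) := by
  rw [sq, integral_prod_mul]

variable [IsFiniteMeasure ν]

theorem integrable_comp_mul_comp_prod (hg : Measurable (uncurry g))
    (hg_mp : ∀ a, MeasurePreserving (g a) μ μ) (hf : MemLp f 2 μ) :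
    Integrable (fun z : (α × α) × M => f (g z.1.1 z.2) * f (g z.1.2 z.2))
      ((ν.prod ν).prod μ) := by
  have hmeas : AEStronglyMeasurable (fun z : (α × α) × M => f (g z.1.1 z.2) * f (g z.1.2 z.2))
      ((ν.prod ν).prod μ) :=
    (aestronglyMeasurable_comp_uncurry_prod hg hg_mp hf.1 _ measurable_fst).mul
      (aestronglyMeasurable_comp_uncurry_prod hg hg_mp hf.1 _ measurable_snd)
  refine (integrable_prod_iff hmeas).2 ⟨ae_of_all _ fun p => ?_, ?_⟩
  · exact (hf.comp_measurePreserving (hg_mp p.1)).integrable_mul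
      (hf.comp_measurePreserving (hg_mp p.2))
  · refine (integrable_const (∫ x, f x ^ 2 ∂μ)).mono' hmeas.norm.integral_prod_right'
      (ae_of_all _ fun p => ?_)
    simp only [Real.norm_eq_abs]
    rw [abs_of_nonneg (integral_nonneg fun x => abs_nonneg _)]
    exact integral_abs_comp_mul_comp_le hf (hg_mp p.1) (hg_mp p.2)

theorem memLp_two_integral_comp (hg : Measurable (uncurry g))
    (hg_mp : ∀ a, MeasurePreserving (g a) μ μ) (hf : MemLp f 2 μ) :
    MemLp (fun x => ∫ a, f (g a x) ∂ν) 2 μ := by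
  refine (memLp_two_iff_integrable_sq ?_).2 ?_
  · exact (aestronglyMeasurable_comp_uncurry_prod hg hg_mp hf.1 ν measurable_id).prod_swap
      |>.integral_prod_right'
  · simpa only [sq_integral_eq_integral_prod_mul] using
      (integrable_comp_mul_comp_prod (ν := ν) hg hg_mp hf).integral_prod_right

theorem integral_sq_integral_comp_eq (hg : Measurable (uncurry g))
    (hg_mp : ∀ a, MeasurePreserving (g a) μ μ) (hf : MemLp f 2 μ) :
    ∫ x, (∫ a, f (g a x) ∂ν) ^ 2 ∂μ = ∫ p, ∫ x, f (g p.1 x) * f (g p.2 x) ∂μ ∂(ν.prod ν) := by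
  simp_rw [sq_integral_eq_integral_prod_mul]
  exact (integral_integral_swap (f := fun (p : α × α) (x : M) => f (g p.1 x) * f (g p.2 x))
    (integrable_comp_mul_comp_prod hg hg_mp hf)).symm

end Fubini

section Cutoff

variable {t β : ℝ}

theorem rpow_one_div_one_add_mul_self (ht : 0 < t) (hβ : 0 < 1 + β) :
    t ^ (1 / (1 + β)) * t = t ^ (2 - β / (1 + β)) := by
  rw [← Real.rpow_add_one ht.ne']
  congr 1
  field_simp
  ring

theorem rpow_one_div_one_add_rpow_neg_mul_sq (ht : 0 < t) (hβ : 0 < 1 + β) :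
    (t ^ (1 / (1 + β))) ^ (-β) * t ^ 2 = t ^ (2 - β / (1 + β)) := by
  rw [← Real.rpow_mul ht.le, ← Real.rpow_natCast, ← Real.rpow_add ht]
  congr 1
  field_simp
  push_cast
  ring

end Cutoff

theorem ergodic_integral_L2_bound_of_poly_mixing_general
    {M : Type*} [MeasurableSpace M] (μ : Measure M) [IsProbabilityMeasure μ]
    (h : ℝ → M → M)
    (h_add : ∀ t s : ℝ, h (t + s) = h t ∘ h s)
    (h_joint : Measurable (Function.uncurry h))
    (h_mp : ∀ t : ℝ, MeasurePreserving (h t) μ μ)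
    (f : M → ℝ) (hf : MemLp f 2 μ)
    (B β S : ℝ) (hB : 0 < B) (hβ : 0 < β)
    (hfS : eLpNorm f 2 μ ≤ ENNReal.ofReal S)
    (hcorr : ∀ t : ℝ, 1 ≤ |t| →
      |∫ x, f (h t x) * f x ∂μ| ≤ B * S ^ 2 * |t| ^ (-β)) :
    ∀ t : ℝ, 1 ≤ t →
      (eLpNorm (fun x => ∫ r in (0:ℝ)..t, f (h r x)) 2 μ) ^ 2 ≤
        ENNReal.ofReal ((4 + B) * S ^ 2 * t ^ (2 - β / (1 + β))) := by
  intro t ht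
  have ht0 : 0 < t := one_pos.trans_le ht
  have hβ₁ : 0 < 1 + β := by linarith
  set L := t ^ (1 / (1 + β))
  have hL : 1 ≤ L := Real.one_le_rpow ht (by positivity)
  have hnear : ∀ p : ℝ × ℝ, |∫ x, f (h p.1 x) * f (h p.2 x) ∂μ| ≤ S ^ 2 := fun p =>
    abs_integral_le_integral_abs.trans <|
      (integral_abs_comp_mul_comp_le hf (h_mp p.1) (h_mp p.2)).trans
        (integral_sq_le_sq_of_eLpNorm_le hf hfS)
  have hfar : ∀ p : ℝ × ℝ, L < |p.1 - p.2| →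
      |∫ x, f (h p.1 x) * f (h p.2 x) ∂μ| ≤ B * S ^ 2 * L ^ (-β) := fun p hp =>
    abs_integral_flow_mul_flow_le_of_decay h_add h_mp hf.1 hB.le hβ.le hcorr hL hp.le
  have hI : (fun x => ∫ r in (0:ℝ)..t, f (h r x))
      = fun x => ∫ r, f (h r x) ∂volume.restrict (Set.Ioc 0 t) :=
    funext fun x => intervalIntegral.integral_of_le ht0.le
  rw [hI, (memLp_two_integral_comp h_joint h_mp hf).sq_eLpNorm_two,
    integral_sq_integral_comp_eq h_joint h_mp hf]
  refine ENNReal.ofReal_le_ofReal <| (integral_prod_restrict_Ioc_le ht0.le (by positivity)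
    (by positivity) (integrable_comp_mul_comp_prod h_joint h_mp hf).integral_prod_left
    hnear hfar).trans ?_
  calc B * S ^ 2 * L ^ (-β) * t ^ 2 + S ^ 2 * (2 * L * t)
      = (B + 2) * S ^ 2 * t ^ (2 - β / (1 + β)) := by
        linear_combination B * S ^ 2 * rpow_one_div_one_add_rpow_neg_mul_sq ht0 hβ₁
          + 2 * S ^ 2 * rpow_one_div_one_add_mul_self ht0 hβ₁
    _ ≤ (4 + B) * S ^ 2 * t ^ (2 - β / (1 + β)) := by
        gcongr ?_ * _ * _
        linarith

/-- (Lemma 3.2 with `β₀ = β/(1+β)`.) Polynomial decay of correlations for a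
measure-preserving flow yields the `L²` bound
`‖I_t f‖₂² ≤ (4 + B) S² t^{2 - β/(1+β)}` on ergodic integrals `I_t f = ∫₀^t f ∘ h_r dr`. -/
theorem ergodic_integral_L2_bound_of_poly_mixing
    {M : Type*} [MeasurableSpace M] (μ : Measure M) [IsProbabilityMeasure μ]
    (h : ℝ → M → M)
    (hmeas : ∀ t : ℝ, Measurable (h t))
    (h_zero : h 0 = id)
    (h_add : ∀ t s : ℝ, h (t + s) = h t ∘ h s)
    (h_joint : Measurable (Function.uncurry h))
    (h_mp : ∀ t : ℝ, MeasurePreserving (h t) μ μ)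
    (f : M → ℝ) (hf : MemLp f 2 μ)
    (B β S : ℝ) (hB : 0 < B) (hβ : 0 < β) (hS : 0 < S)
    (hfS : eLpNorm f 2 μ ≤ ENNReal.ofReal S)
    (hcorr : ∀ t : ℝ, 1 ≤ |t| →
      |∫ x, f (h t x) * f x ∂μ| ≤ B * S ^ 2 * |t| ^ (-β)) :
    ∀ t : ℝ, 1 ≤ t →
      (eLpNorm (fun x => ∫ r in (0:ℝ)..t, f (h r x)) 2 μ) ^ 2 ≤
        ENNReal.ofReal ((4 + B) * S ^ 2 * t ^ (2 - β / (1 + β))) :=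
  ergodic_integral_L2_bound_of_poly_mixing_general μ h h_add h_joint h_mp f hf B β S hB hβ hfS hcorr
end

section
/- Let (h_t)_{t∈ℝ} be a measurable measure-preserving flow on a probability space (M, μ), let f : M → ℝ be a bounded measurable function, and let B' > 0, S > 0 and 0 < β₀ < 1 be constants such that the ergodic integrals I_t f(x) = ∫₀^t f(h_r(x)) dr satisfy ‖I_t f‖₂² ≤ B' S² t^{2-β₀} for all t ≥ 1. Set γ = β₀/4. Then there exists a constant B̃ ≥ 1, depending only on β₀ and B', such that for every T₀ ≥ 1 there exists a measurable set E ⊆ M with μ(E) ≤ T₀^{-γ} such that for all t ≥ T₀ and all x ∈ M \ E one has |I_t f(x)| ≤ B̃ (S + ‖f‖_∞) t^{1-γ}. -/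
/-!
Chebyshev's inequality bounds the measure of `{x | K S p^{1-γ} ≤ |I_p f(x)|}` by
`(B'/K²) p^{-2γ}`. Along the grid `p_j = (T₀^γ + γ j)^{1/γ}`, and with `K² = B'(1+γ)/γ`, these
bounds telescope to a total of at most `T₀^{-γ}`; the grid is fine enough that
`t - p_j ≤ t^{1-γ}` for the last `p_j ≤ t`. By Fubini, almost every orbit sees `|f| ≤ ‖f‖_∞` at
almost every time, so off these sets `|I_t f| ≤ |I_{p_j} f| + ‖f‖_∞ (t - p_j)`
`≤ (K + 1)(S + ‖f‖_∞) t^{1-γ}`.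
-/

open MeasureTheory intervalIntegral

theorem Real.rpow_sub_rpow_le_mul_rpow_mul_sub {a b m : ℝ} (hb : 0 < b) (hba : b ≤ a)
    (hm : 1 ≤ m) : a ^ m - b ^ m ≤ m * a ^ (m - 1) * (a - b) := by
  have ha : 0 < a := hb.trans_le hba
  have hbern := one_add_mul_self_le_rpow_one_add (s := b / a - 1)
    (by linarith [div_pos hb ha]) hm
  rw [add_sub_cancel, Real.div_rpow hb.le ha.le, le_div_iff₀ (by positivity)] at hbern
  have hpow : a ^ m = a ^ (m - 1) * a := by
    rw [← Real.rpow_add_one ha.ne', sub_add_cancel]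
  rw [hpow] at hbern ⊢
  field_simp at hbern
  nlinarith [hbern]

theorem sum_range_div_sq_le_inv {w γ : ℝ} (hw : 1 ≤ w) (hγ : 0 < γ) (n : ℕ) :
    ∑ j ∈ Finset.range n, γ / (1 + γ) / (w + γ * j) ^ 2 ≤ w⁻¹ := by
  have hterm : ∀ j : ℕ, γ / (1 + γ) / (w + γ * j) ^ 2
      ≤ (w + γ * j)⁻¹ - (w + γ * ↑(j + 1))⁻¹ := by
    intro j
    set q := w + γ * j
    have hq : 1 ≤ q := le_add_of_le_of_nonneg hw (by positivity)
    have hnext : w + γ * ↑(j + 1) = q + γ := by push_cast; ring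
    rw [hnext, div_div, inv_sub_inv (by positivity) (by positivity), add_sub_cancel_left,
      div_le_div_iff₀ (by positivity) (by positivity)]
    have hq0 : (0:ℝ) ≤ q := by positivity
    nlinarith [mul_nonneg (mul_nonneg (sq_nonneg γ) hq0) (sub_nonneg.2 hq)]
  calc _ ≤ ∑ j ∈ Finset.range n, ((w + γ * j)⁻¹ - (w + γ * ↑(j + 1))⁻¹) :=
        Finset.sum_le_sum fun j _ => hterm j
    _ = w⁻¹ - (w + γ * n)⁻¹ := by
        rw [Finset.sum_range_sub' (fun j : ℕ => (w + γ * j)⁻¹)]; simp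
    _ ≤ w⁻¹ := by
        have : 0 ≤ (w + γ * n)⁻¹ := by positivity
        linarith

theorem mul_rpow_div_sq_mul_rpow_eq {β B' K S p : ℝ} (hβ : 0 < β) (hB' : B' ≠ 0) (hS : S ≠ 0)
    (hp : 0 < p) (hK : K ^ 2 = B' * (1 + β / 4) / (β / 4)) :
    B' * S ^ 2 * p ^ (2 - β) / (K * S * p ^ (1 - β / 4)) ^ 2
      = β / 4 / (1 + β / 4) / (p ^ (β / 4)) ^ 2 := by
  have h1 : p ^ (2 - β) = p ^ 2 / (p ^ (β / 4)) ^ 4 := by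
    rw [Real.rpow_sub hp, ← Real.rpow_natCast, ← Real.rpow_natCast, ← Real.rpow_mul hp.le]
    norm_num
  have h2 : p ^ (1 - β / 4) = p / p ^ (β / 4) := by
    rw [Real.rpow_sub hp, Real.rpow_one]
  have hq : 0 < p ^ (β / 4) := by positivity
  rw [h1, h2, mul_pow, mul_pow, hK]
  field_simp

noncomputable def gridTime (γ T₀ : ℝ) (j : ℕ) : ℝ := (T₀ ^ γ + γ * j) ^ γ⁻¹

section gridTime

variable {γ T₀ : ℝ}

theorem gridTime_rpow (hγ : 0 < γ) (hT₀ : 0 ≤ T₀) (j : ℕ) :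
    gridTime γ T₀ j ^ γ = T₀ ^ γ + γ * j :=
  Real.rpow_inv_rpow (by positivity) hγ.ne'

theorem one_le_gridTime (hγ : 0 < γ) (hT₀ : 1 ≤ T₀) (j : ℕ) : 1 ≤ gridTime γ T₀ j :=
  Real.one_le_rpow (le_add_of_le_of_nonneg (Real.one_le_rpow hT₀ hγ.le) (by positivity))
    (inv_nonneg.2 hγ.le)

theorem exists_gridTime_le (hγ : 0 < γ) (hγ1 : γ ≤ 1) (hT₀ : 0 < T₀) {t : ℝ} (ht : T₀ ≤ t) :
    ∃ j, gridTime γ T₀ j ≤ t ∧ t - gridTime γ T₀ j ≤ t ^ (1 - γ) := by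
  have ht0 : 0 < t := hT₀.trans_le ht
  have hTt : T₀ ^ γ ≤ t ^ γ := Real.rpow_le_rpow hT₀.le ht hγ.le
  set j := ⌊(t ^ γ - T₀ ^ γ) / γ⌋₊
  set b := T₀ ^ γ + γ * j
  have hb : 0 < b := by positivity
  have hbt : b ≤ t ^ γ := by
    have := Nat.floor_le (div_nonneg (sub_nonneg.2 hTt) hγ.le)
    rw [le_div_iff₀ hγ] at this
    linarith
  have htb : t ^ γ - b ≤ γ := by
    have := Nat.lt_floor_add_one ((t ^ γ - T₀ ^ γ) / γ)
    rw [div_lt_iff₀ hγ] at this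
    linarith
  have hroot : (t ^ γ) ^ γ⁻¹ = t := Real.rpow_rpow_inv ht0.le hγ.ne'
  refine ⟨j, ?_, ?_⟩
  · calc gridTime γ T₀ j = b ^ γ⁻¹ := rfl
      _ ≤ (t ^ γ) ^ γ⁻¹ := Real.rpow_le_rpow hb.le hbt (inv_nonneg.2 hγ.le)
      _ = t := hroot
  · calc t - gridTime γ T₀ j = (t ^ γ) ^ γ⁻¹ - b ^ γ⁻¹ := by rw [hroot]; rfl
      _ ≤ γ⁻¹ * (t ^ γ) ^ (γ⁻¹ - 1) * (t ^ γ - b) :=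
        Real.rpow_sub_rpow_le_mul_rpow_mul_sub hb hbt (one_le_inv₀ hγ |>.2 hγ1)
      _ ≤ γ⁻¹ * (t ^ γ) ^ (γ⁻¹ - 1) * γ := by gcongr
      _ = t ^ (1 - γ) := by
        rw [← Real.rpow_mul ht0.le, mul_sub, mul_inv_cancel₀ hγ.ne', mul_one,
          mul_comm, ← mul_assoc, mul_inv_cancel₀ hγ.ne', one_mul]

end gridTime

theorem abs_intervalIntegral_le_of_gridTime {g : ℝ → ℝ} {γ T₀ A L t : ℝ} (hγ : 0 < γ)
    (hγ1 : γ ≤ 1) (hT₀ : 0 < T₀) (hg : AEStronglyMeasurable g) (hgL : ∀ᵐ r, |g r| ≤ L)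
    (hL : 0 ≤ L) (hA : 0 ≤ A)
    (hgrid : ∀ j, |∫ r in 0..gridTime γ T₀ j, g r| ≤ A * gridTime γ T₀ j ^ (1 - γ))
    (ht : T₀ ≤ t) :
    |∫ r in 0..t, g r| ≤ (A + L) * t ^ (1 - γ) := by
  obtain ⟨j, hpt, hgap⟩ := exists_gridTime_le hγ hγ1 hT₀ ht
  set p := gridTime γ T₀ j
  have hp : 0 ≤ p := Real.rpow_nonneg (by positivity) _
  have hgL' : ∀ᵐ r, ‖g r‖ ≤ L := hgL.mono fun r hr => (Real.norm_eq_abs _).trans_le hr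
  have hint : ∀ a b, IntervalIntegrable g volume a b := fun a b =>
    intervalIntegrable_iff.2 <|
      Measure.integrableOn_of_bounded measure_Ioc_lt_top.ne hg (ae_restrict_of_ae hgL')
  have htail : |∫ r in p..t, g r| ≤ L * (t - p) := by
    simpa [abs_of_nonneg (sub_nonneg.2 hpt)] using
      norm_integral_le_of_norm_le_const_ae (a := p) (b := t) (hgL'.mono fun r hr _ => hr)
  rw [← integral_add_adjacent_intervals (hint 0 p) (hint p t)]
  calc |(∫ r in 0..p, g r) + ∫ r in p..t, g r|
      ≤ |∫ r in 0..p, g r| + |∫ r in p..t, g r| := abs_add_le _ _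
    _ ≤ A * t ^ (1 - γ) + L * t ^ (1 - γ) := by
        gcongr
        · exact (hgrid j).trans (by gcongr)
        · exact htail.trans (by gcongr)
    _ = (A + L) * t ^ (1 - γ) := by ring

section

variable {α : Type*} [MeasurableSpace α] {μ : Measure α}

theorem measure_abs_ge_le_div_sq_of_eLpNorm_sq_le {g : α → ℝ} (hg : AEStronglyMeasurable g μ)
    {A ε : ℝ} (hε : 0 < ε) (hA : eLpNorm g 2 μ ^ 2 ≤ ENNReal.ofReal A) :
    μ {x | ε ≤ |g x|} ≤ ENNReal.ofReal (A / ε ^ 2) := by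
  have hcheb := meas_ge_le_mul_pow_eLpNorm_enorm (μ := μ) two_ne_zero ENNReal.ofNat_ne_top hg
    (ε := ENNReal.ofReal ε) (by simpa using hε) (by simp)
  have hset : {x | ε ≤ |g x|} = {x | ENNReal.ofReal ε ≤ ‖g x‖ₑ} := by
    ext x
    simp [Real.enorm_eq_ofReal_abs, ENNReal.ofReal_le_ofReal_iff (abs_nonneg _)]
  rw [hset]
  refine hcheb.trans ?_
  rw [ENNReal.toReal_ofNat, ENNReal.rpow_two, ENNReal.rpow_two, div_eq_mul_inv, mul_comm A,
    ENNReal.ofReal_mul (by positivity), ← ENNReal.ofReal_inv_of_pos hε,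
    ← ENNReal.ofReal_pow (by positivity), inv_pow]
  gcongr

theorem measure_iUnion_le_of_le_div_sq {E : ℕ → Set α} {w γ : ℝ} (hw : 1 ≤ w) (hγ : 0 < γ)
    (hE : ∀ j : ℕ, μ (E j) ≤ ENNReal.ofReal (γ / (1 + γ) / (w + γ * j) ^ 2)) :
    μ (⋃ j, E j) ≤ ENNReal.ofReal w⁻¹ := by
  refine (measure_iUnion_le E).trans <| (ENNReal.tsum_le_tsum hE).trans <|
    ENNReal.tsum_le_of_sum_range_le fun n => ?_
  rw [← ENNReal.ofReal_sum_of_nonneg fun j _ => by positivity]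
  exact ENNReal.ofReal_le_ofReal (sum_range_div_sq_le_inv hw hγ n)

theorem measurable_intervalIntegral_of_uncurry {F : α → ℝ → ℝ}
    (hF : Measurable (Function.uncurry F)) (a b : ℝ) :
    Measurable fun x => ∫ r in a..b, F x r := by
  have hset : ∀ s : Set ℝ, Measurable fun x => ∫ r in s, F x r := fun s =>
    (hF.stronglyMeasurable.integral_prod_right' (ν := volume.restrict s)).measurable
  exact (hset _).sub (hset _)

theorem ae_ae_mem_of_ae_mem [SFinite μ] {T : Type*} [MeasurableSpace T] {ν : Measure T}
    [SFinite ν] {h : T → α → α} (hh : Measurable (Function.uncurry h))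
    (hmp : ∀ t, Measure.QuasiMeasurePreserving (h t) μ μ) {s : Set α} (hs : MeasurableSet s)
    (hae : ∀ᵐ y ∂μ, y ∈ s) : ∀ᵐ x ∂μ, ∀ᵐ t ∂ν, h t x ∈ s := by
  rw [Measure.ae_ae_comm (p := fun x t => h t x ∈ s) (hs.preimage (hh.comp measurable_swap))]
  exact ae_of_all _ fun t => (hmp t).ae hae

theorem ae_ae_abs_comp_le_eLpNorm_top [SFinite μ] {h : ℝ → α → α}
    (hh : Measurable (Function.uncurry h)) (hmp : ∀ t, Measure.QuasiMeasurePreserving (h t) μ μ)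
    {f : α → ℝ} (hf : Measurable f) {C : ℝ} (hC : ∀ x, |f x| ≤ C) :
    ∀ᵐ x ∂μ, ∀ᵐ r, |f (h r x)| ≤ (eLpNorm f ⊤ μ).toReal := by
  have hfL : ∀ᵐ y ∂μ, |f y| ≤ (eLpNorm f ⊤ μ).toReal := by
    rw [toReal_eLpNorm hf.aestronglyMeasurable]
    simpa using ae_le_lpNorm_exponent_top
      (memLp_top_of_bound hf.aestronglyMeasurable C (ae_of_all μ hC))
  exact ae_ae_mem_of_ae_mem hh hmp (measurableSet_le hf.abs measurable_const) hfL

theorem measure_iUnion_abs_ge_gridTime_le {g : ℝ → α → ℝ} {β B' K S T₀ : ℝ} (hβ : 0 < β)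
    (hB' : B' ≠ 0) (hS : 0 < S) (hK : K ^ 2 = B' * (1 + β / 4) / (β / 4)) (hK0 : 0 < K)
    (hT₀ : 1 ≤ T₀) (hg : ∀ t, AEStronglyMeasurable (g t) μ)
    (hL2 : ∀ t, 1 ≤ t → eLpNorm (g t) 2 μ ^ 2 ≤ ENNReal.ofReal (B' * S ^ 2 * t ^ (2 - β))) :
    μ (⋃ j, {x | K * S * gridTime (β / 4) T₀ j ^ (1 - β / 4) ≤ |g (gridTime (β / 4) T₀ j) x|})
      ≤ ENNReal.ofReal (T₀ ^ (-(β / 4))) := by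
  have hγ : 0 < β / 4 := by positivity
  rw [Real.rpow_neg (by linarith)]
  refine measure_iUnion_le_of_le_div_sq (Real.one_le_rpow hT₀ hγ.le) hγ fun j => ?_
  have hp := one_le_gridTime hγ hT₀ j
  rw [← gridTime_rpow hγ (by linarith),
    ← mul_rpow_div_sq_mul_rpow_eq hβ hB' hS.ne' (by linarith) hK]
  exact measure_abs_ge_le_div_sq_of_eLpNorm_sq_le (hg _) (by positivity) (hL2 _ hp)

end

/-- (Proposition 3.1.) If the ergodic integrals `I_t f` of a bounded
measurable function `f` satisfy `‖I_t f‖₂² ≤ B' S² t^{2-β₀}` for all `t ≥ 1`, then with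
`γ = β₀/4` there is a constant `B̃ ≥ 1`, depending only on `β₀` and `B'`, such that for every
`T₀ ≥ 1` there is a measurable set `E` of measure `μ(E) ≤ T₀^{-γ}` with
`|I_t f(x)| ≤ B̃ (S + ‖f‖_∞) t^{1-γ}` for all `t ≥ T₀` and `x ∉ E`. -/
theorem ergodic_integral_pointwise_bound_off_small_set
    (β₀ B' : ℝ) (hβ₀ : 0 < β₀) (hβ₀' : β₀ < 1) (hB' : 0 < B') :
    ∃ Btilde : ℝ, 1 ≤ Btilde ∧
      ∀ (M : Type*) (_ : MeasurableSpace M) (μ : Measure M),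
        IsProbabilityMeasure μ →
        ∀ h : ℝ → M → M,
          (∀ t : ℝ, Measurable (h t)) →
          h 0 = id →
          (∀ t s : ℝ, h (t + s) = h t ∘ h s) →
          Measurable (Function.uncurry h) →
          (∀ t : ℝ, MeasurePreserving (h t) μ μ) →
          ∀ f : M → ℝ, Measurable f → (∃ C : ℝ, ∀ x, |f x| ≤ C) →
            ∀ S : ℝ, 0 < S →
              (∀ t : ℝ, 1 ≤ t →
                (eLpNorm (fun x => ∫ r in (0:ℝ)..t, f (h r x)) 2 μ) ^ 2 ≤
                  ENNReal.ofReal (B' * S ^ 2 * t ^ (2 - β₀))) →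
              ∀ T₀ : ℝ, 1 ≤ T₀ →
                ∃ E : Set M, MeasurableSet E ∧
                  μ E ≤ ENNReal.ofReal (T₀ ^ (-(β₀ / 4))) ∧
                  ∀ t : ℝ, T₀ ≤ t → ∀ x ∉ E,
                    |∫ r in (0:ℝ)..t, f (h r x)| ≤
                      Btilde * (S + (eLpNorm f ⊤ μ).toReal) * t ^ (1 - β₀ / 4) := by
  set K := √(B' * (1 + β₀ / 4) / (β₀ / 4))
  have hK : K ^ 2 = B' * (1 + β₀ / 4) / (β₀ / 4) := Real.sq_sqrt (by positivity)
  refine ⟨K + 1, le_add_of_nonneg_left (Real.sqrt_nonneg _), ?_⟩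
  intro M _ μ _ h _ _ _ hh hmp f hf ⟨C, hC⟩ S hS hL2 T₀ hT₀
  set L := (eLpNorm f ⊤ μ).toReal
  have hF : Measurable (Function.uncurry fun x r => f (h r x)) :=
    hf.comp (hh.comp measurable_swap)
  obtain ⟨G, hG, hGmeas, hGL⟩ := (ae_ae_abs_comp_le_eLpNorm_top hh
    (fun t => (hmp t).quasiMeasurePreserving) hf hC).exists_measurable_mem
  set E := fun j => {x | K * S * gridTime (β₀ / 4) T₀ j ^ (1 - β₀ / 4)
    ≤ |∫ r in (0:ℝ)..gridTime (β₀ / 4) T₀ j, f (h r x)|}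
  refine ⟨Gᶜ ∪ ⋃ j, E j, hGmeas.compl.union (.iUnion fun j =>
    measurableSet_le measurable_const (measurable_intervalIntegral_of_uncurry hF _ _).abs), ?_, ?_⟩
  · refine (measure_union_le _ _).trans ?_
    rw [show μ Gᶜ = 0 from hG, zero_add]
    exact measure_iUnion_abs_ge_gridTime_le hβ₀ hB'.ne' hS hK (by positivity) hT₀
      (fun t => (measurable_intervalIntegral_of_uncurry hF 0 t).aestronglyMeasurable) hL2
  · intro t ht x hx
    simp only [Set.mem_union, Set.mem_compl_iff, Set.mem_iUnion, not_or, not_not, not_exists] at hx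
    have hL : 0 ≤ L := ENNReal.toReal_nonneg
    have hK0 : 0 ≤ K := Real.sqrt_nonneg _
    have ht0 : 0 ≤ t ^ (1 - β₀ / 4) := Real.rpow_nonneg (by linarith) _
    calc _ ≤ (K * S + L) * t ^ (1 - β₀ / 4) :=
          abs_intervalIntegral_le_of_gridTime (by positivity) (by linarith) (by linarith)
            (hF.comp measurable_prodMk_left).aestronglyMeasurable (hGL x hx.1) hL
            (by positivity) (fun j => (not_le.1 (hx.2 j)).le) ht
      _ ≤ (K + 1) * (S + L) * t ^ (1 - β₀ / 4) := by
          gcongr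
          nlinarith [mul_nonneg hK0 hL]
end

section
/- Let τ̃ : ℝ × ℝ → ℝ and a : ℝ × ℝ → ℝ be continuously differentiable functions with τ̃(r,s) > 0 for all (r,s), and suppose that for all (r,s) ∈ ℝ²: ∂_r τ̃(r,s) = a(r,s) − τ̃(r,s) + ∂_s(s · τ̃(r,s)). Fix t ∈ ℝ and let u : ℝ → ℝ be a differentiable function such that t = ∫₀^{u(r)} τ̃(r,s) ds for all r ∈ ℝ. Define v(r) = t − ∫₀^{u(r)} a(r,s) ds. Then for every r ∈ ℝ, d/dr ( e^r u(r) ) = e^r v(r) / τ̃(r, u(r)). -/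
/-! Differentiating the constraint `t = ∫₀^{u(r)} τ(r,s) ds` by the Leibniz rule gives
`0 = ∫₀^{u(r)} ∂_r τ(r,s) ds + u'(r) τ(r,u(r))`. By the structural identity and the fundamental
theorem of calculus applied to `s ↦ s τ(r,s)`, the integral equals `(t - v(r)) - t + u(r) τ(r,u(r))`,
so `u' = v / τ(r,u) - u`, which is `(e^r u)' = e^r v / τ(r,u)`. -/

open MeasureTheory intervalIntegral ContinuousLinearMap

section Leibniz

variable {E : Type*} [NormedAddCommGroup E] [NormedSpace ℝ E] {f : ℝ × ℝ → E}

theorem HasFDerivAt.hasDerivAt_slice_fst {f' : ℝ × ℝ →L[ℝ] E} {x s : ℝ}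
    (hf : HasFDerivAt f f' (x, s)) : HasDerivAt (fun r => f (r, s)) (f' (1, 0)) x :=
  hf.comp_hasDerivAt x ((hasDerivAt_id x).prodMk (hasDerivAt_const x s))

theorem ContDiff.continuous_fderiv_apply_fst (hf : ContDiff ℝ 1 f) :
    Continuous fun p => fderiv ℝ f p (1, 0) :=
  (hf.continuous_fderiv one_ne_zero).clm_apply continuous_const

theorem hasDerivAt_intervalIntegral_of_contDiff (hf : ContDiff ℝ 1 f) (a b r₀ : ℝ) :
    HasDerivAt (fun r => ∫ s in a..b, f (r, s))
      (∫ s in a..b, fderiv ℝ f (r₀, s) (1, 0)) r₀ := by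
  have hf' := hf.continuous_fderiv_apply_fst
  obtain ⟨C, hC⟩ : ∃ C, ∀ p ∈ Metric.closedBall r₀ 1 ×ˢ Set.uIcc a b,
      ‖fderiv ℝ f p (1, 0)‖ ≤ C :=
    ((isCompact_closedBall r₀ 1).prod isCompact_uIcc).exists_bound_of_continuousOn
      hf'.continuousOn
  refine (hasDerivAt_integral_of_dominated_loc_of_deriv_le (F := fun r s => f (r, s))
    (F' := fun r s => fderiv ℝ f (r, s) (1, 0)) (bound := fun _ => C)
    (Metric.ball_mem_nhds r₀ one_pos) ?_ ?_ ?_ ?_ intervalIntegrable_const ?_).2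
  · exact .of_forall fun r => (hf.continuous.comp (.prodMk_right r)).aestronglyMeasurable
  · exact (hf.continuous.comp (.prodMk_right r₀)).intervalIntegrable a b
  · exact (hf'.comp (.prodMk_right r₀)).aestronglyMeasurable
  · exact ae_of_all _ fun s hs r hr =>
      hC (r, s) ⟨Metric.ball_subset_closedBall hr, Set.uIoc_subset_uIcc hs⟩
  · exact ae_of_all _ fun s _ r _ =>
      ((hf.differentiable one_ne_zero) (r, s)).hasFDerivAt.hasDerivAt_slice_fst

variable [CompleteSpace E]

theorem hasStrictFDerivAt_parametric_primitive_of_contDiff (hf : ContDiff ℝ 1 f) (a : ℝ)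
    (p : ℝ × ℝ) :
    HasStrictFDerivAt (fun q : ℝ × ℝ => ∫ s in a..q.2, f (q.1, s))
      ((toSpanSingleton ℝ (∫ s in a..p.2, fderiv ℝ f (p.1, s) (1, 0))).coprod
        (toSpanSingleton ℝ (f p))) p := by
  have hcont : ∀ g : ℝ × ℝ → E, Continuous g → Continuous fun q => toSpanSingleton ℝ (g q) :=
    fun g hg => toSpanSingletonCLE.continuous.comp hg
  refine hasStrictFDerivAt_uncurry_coprod (f := fun r y => ∫ s in a..y, f (r, s))
    (f₁ := fun r y => toSpanSingleton ℝ (∫ s in a..y, fderiv ℝ f (r, s) (1, 0)))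
    (f₂ := fun r y => toSpanSingleton ℝ (f (r, y)))
    (.of_forall fun q => (hasDerivAt_intervalIntegral_of_contDiff hf a q.2 q.1).hasFDerivAt)
    (.of_forall fun q => ((hf.continuous.comp (.prodMk_right q.1)).integral_hasStrictDerivAt
      a q.2).hasDerivAt.hasFDerivAt)
    ?_ ?_
  · exact (hcont _ (continuous_parametric_primitive_of_continuous
      (f := fun r s => fderiv ℝ f (r, s) (1, 0)) hf.continuous_fderiv_apply_fst)).continuousAt
  · exact (hcont f hf.continuous).continuousAt

theorem HasDerivAt.intervalIntegral_of_contDiff (hf : ContDiff ℝ 1 f) (a : ℝ) {u : ℝ → ℝ}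
    {u' r₀ : ℝ} (hu : HasDerivAt u u' r₀) :
    HasDerivAt (fun r => ∫ s in a..u r, f (r, s))
      ((∫ s in a..u r₀, fderiv ℝ f (r₀, s) (1, 0)) + u' • f (r₀, u r₀)) r₀ := by
  refine ((hasStrictFDerivAt_parametric_primitive_of_contDiff hf a (r₀, u r₀)).hasFDerivAt
    |>.comp_hasDerivAt r₀ ((hasDerivAt_id r₀).prodMk hu)).congr_deriv ?_
  simp

end Leibniz

theorem integral_fderiv_fst_eq_of_structural_identity {τ a : ℝ × ℝ → ℝ}
    (hτ : ContDiff ℝ 1 τ) (ha : Continuous a) {r : ℝ}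
    (hstruct : ∀ s : ℝ, deriv (fun r' => τ (r', s)) r =
      a (r, s) - τ (r, s) + deriv (fun s' => s' * τ (r, s')) s) (y : ℝ) :
    ∫ s in 0..y, fderiv ℝ τ (r, s) (1, 0) =
      (∫ s in 0..y, a (r, s)) - (∫ s in 0..y, τ (r, s)) + y * τ (r, y) := by
  have hslice : ContDiff ℝ 1 fun s => τ (r, s) := hτ.comp (contDiff_const.prodMk contDiff_id)
  have hmul : ContDiff ℝ 1 fun s => s * τ (r, s) := contDiff_id.mul hslice
  have hpartial : ∀ s, fderiv ℝ τ (r, s) (1, 0) =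
      a (r, s) - τ (r, s) + deriv (fun s' => s' * τ (r, s')) s := fun s => by
    rw [← hstruct, ((hτ.differentiable one_ne_zero (r, s)).hasFDerivAt.hasDerivAt_slice_fst).deriv]
  have hint : ∀ g : ℝ → ℝ, Continuous g → IntervalIntegrable g volume 0 y :=
    fun g hg => hg.intervalIntegrable 0 y
  have hcont_a : Continuous fun s => a (r, s) := ha.comp (.prodMk_right r)
  have hcont_d := hmul.continuous_deriv le_rfl
  simp_rw [hpartial]
  rw [integral_add ((hint _ hcont_a).sub (hint _ hslice.continuous)) (hint _ hcont_d),
    integral_sub (hint _ hcont_a) (hint _ hslice.continuous),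
    integral_deriv_eq_sub (fun s _ => hmul.differentiable one_ne_zero s) (hint _ hcont_d),
    zero_mul, sub_zero]

/-- (Abstract Lemma 4.1.) If `τ, a : ℝ × ℝ → ℝ` are `C¹` with `τ > 0` and
`∂_r τ = a - τ + ∂_s (s·τ)`, and `u` is differentiable with `t = ∫₀^{u(r)} τ(r,s) ds` for all
`r`, then with `v(r) = t - ∫₀^{u(r)} a(r,s) ds` one has
`d/dr (e^r u(r)) = e^r v(r) / τ(r, u(r))`. -/
theorem deriv_exp_mul_timeChange_cocycle
    (τ a : ℝ × ℝ → ℝ) (hτ : ContDiff ℝ 1 τ) (ha : ContDiff ℝ 1 a)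
    (hτpos : ∀ p : ℝ × ℝ, 0 < τ p)
    (hstruct : ∀ r s : ℝ,
      deriv (fun r' => τ (r', s)) r =
        a (r, s) - τ (r, s) + deriv (fun s' => s' * τ (r, s')) s)
    (t : ℝ) (u : ℝ → ℝ) (hu : Differentiable ℝ u)
    (hu_def : ∀ r : ℝ, t = ∫ s in (0:ℝ)..(u r), τ (r, s))
    (v : ℝ → ℝ) (hv : ∀ r : ℝ, v r = t - ∫ s in (0:ℝ)..(u r), a (r, s)) :
    ∀ r : ℝ,
      deriv (fun r' => Real.exp r' * u r') r = Real.exp r * v r / τ (r, u r) := by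
  intro r
  have hconst : (fun r => ∫ s in (0:ℝ)..(u r), τ (r, s)) = fun _ => t :=
    funext fun r => (hu_def r).symm
  have hzero := ((hu r).hasDerivAt.intervalIntegral_of_contDiff hτ 0).unique
    (hconst ▸ hasDerivAt_const r t)
  rw [integral_fderiv_fst_eq_of_structural_identity hτ ha.continuous (hstruct r),
    ← hu_def r, smul_eq_mul] at hzero
  have hderiv_u : deriv u r = v r / τ (r, u r) - u r := by
    have hτ_ne := (hτpos (r, u r)).ne'
    field_simp
    linarith [hv r]
  rw [((Real.hasDerivAt_exp r).fun_mul (hu r).hasDerivAt).deriv, hderiv_u]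
  field_simp
  ring
end

section
/- Let τ̃ : ℝ × ℝ → ℝ and a : ℝ × ℝ → ℝ be continuously differentiable functions with τ̃(r,s) > 0 for all (r,s), and suppose that for all (r,s) ∈ ℝ²: ∂_r τ̃(r,s) = a(r,s) − τ̃(r,s) + ∂_s(s · τ̃(r,s)). Fix t ∈ ℝ and let u : ℝ → ℝ be a differentiable function such that t = ∫₀^{u(r)} τ̃(r,s) ds for all r ∈ ℝ. Then for every r ∈ ℝ, u'(r) = −(τ̃(r, u(r)))⁻¹ · ( ∫₀^{u(r)} a(r,s) ds − t ) − u(r). -/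
/-!
Put `G r y = ∫₀^y τ(r, s) ds`. It is differentiable on `ℝ²` with `∂_r G = ∫₀^y ∂_r τ` and
`∂_y G = τ(r, y)`: split `G (r, y)` into the fixed-endpoint integral `G (r, y₀)`, the moving
endpoint `∫_{y₀}^y τ(r₀, s) ds`, and a remainder bounded by `Lip(τ) |r - r₀| |y - y₀|`.
Differentiating `G (r, u r) = t` gives `∂_r G + τ(r, u) u' = 0`. Integrating the structural
identity over `[0, u]`, the term `∂_s (s τ)` contributes `u τ(r, u)`, so
`∂_r G = ∫₀^u a - t + u τ(r, u)`; solving for `u'` gives the formula.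
-/

open MeasureTheory intervalIntegral Metric Set Asymptotics Topology
open scoped Interval

variable {E : Type*} [NormedAddCommGroup E] [NormedSpace ℝ E]
  {f : ℝ × ℝ → E}

theorem DifferentiableAt.hasDerivAt_comp_prodMk_left {r s : ℝ} (hf : DifferentiableAt ℝ f (r, s)) :
    HasDerivAt (fun r' => f (r', s)) (fderiv ℝ f (r, s) (1, 0)) r := by
  exact (hf.hasFDerivAt.comp r (hasFDerivAt_prodMk_left r s)).hasDerivAt

theorem ContDiff.hasDerivAt_intervalIntegral_param (hf : ContDiff ℝ 1 f) (c y r₀ : ℝ) :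
    HasDerivAt (fun r => ∫ s in c..y, f (r, s)) (∫ s in c..y, fderiv ℝ f (r₀, s) (1, 0)) r₀ := by
  have hfc : Continuous f := hf.continuous
  have hf' : Continuous fun p => fderiv ℝ f p (1, 0) :=
    (hf.continuous_fderiv one_ne_zero).clm_apply continuous_const
  obtain ⟨C, hC⟩ := ((isCompact_closedBall r₀ 1).prod isCompact_uIcc).exists_bound_of_continuousOn
    hf'.continuousOn (E := E)
  refine (hasDerivAt_integral_of_dominated_loc_of_deriv_le (bound := fun _ => C)
    (ball_mem_nhds r₀ one_pos) (.of_forall fun r => (hfc.comp (.prodMk_right r)).aestronglyMeasurable)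
    ((hfc.comp (.prodMk_right r₀)).intervalIntegrable c y)
    (hf'.comp (.prodMk_right r₀)).aestronglyMeasurable
    (.of_forall fun s hs r hr => hC (r, s) ⟨ball_subset_closedBall hr, uIoc_subset_uIcc hs⟩)
    intervalIntegrable_const
    (.of_forall fun s _ r _ => (hf.differentiable one_ne_zero _).hasDerivAt_comp_prodMk_left)).2

theorem ContDiff.isLittleO_intervalIntegral_sub_param (hf : ContDiff ℝ 1 f) (p₀ : ℝ × ℝ) :
    (fun p : ℝ × ℝ => ∫ s in p₀.2..p.2, (f (p.1, s) - f (p₀.1, s))) =o[𝓝 p₀] fun p => p - p₀ := by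
  obtain ⟨K, hK⟩ := hf.contDiffOn.exists_lipschitzOnWith one_ne_zero (convex_closedBall p₀ 1)
    (isCompact_closedBall p₀ 1)
  refine IsBigO.trans_isLittleO ?_ (isLittleO_pow_sub_sub p₀ one_lt_two)
  refine IsBigO.of_bound K ?_
  filter_upwards [ball_mem_nhds p₀ one_pos] with p hp
  rw [mem_ball_iff_norm] at hp
  have hr : ‖p.1 - p₀.1‖ ≤ ‖p - p₀‖ := norm_fst_le (p - p₀)
  have hy : |p.2 - p₀.2| ≤ ‖p - p₀‖ := norm_snd_le (p - p₀)
  have hbound : ∀ s ∈ Ι p₀.2 p.2, ‖f (p.1, s) - f (p₀.1, s)‖ ≤ K * ‖p - p₀‖ := by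
    intro s hs
    have hs' : |s - p₀.2| ≤ |p.2 - p₀.2| := abs_sub_left_of_mem_uIcc (uIoc_subset_uIcc hs)
    have hmem : ∀ r, ‖r - p₀.1‖ ≤ ‖p - p₀‖ → (r, s) ∈ closedBall p₀ 1 := fun r hr' => by
      rw [mem_closedBall_iff_norm, Prod.norm_def]
      exact max_le (hr'.trans hp.le) (hs'.trans (hy.trans hp.le))
    calc ‖f (p.1, s) - f (p₀.1, s)‖ ≤ K * ‖(p.1, s) - (p₀.1, s)‖ :=
          hK.norm_sub_le (hmem _ hr) (hmem _ (by simp))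
      _ ≤ K * ‖p - p₀‖ := by
          gcongr
          simp [Prod.norm_def]
  calc ‖∫ s in p₀.2..p.2, (f (p.1, s) - f (p₀.1, s))‖
      ≤ K * ‖p - p₀‖ * |p.2 - p₀.2| := norm_integral_le_of_norm_le_const hbound
    _ ≤ K * ‖‖p - p₀‖ ^ 2‖ := by
      rw [norm_pow, norm_norm, sq, ← mul_assoc]; gcongr

theorem ContDiff.hasFDerivAt_intervalIntegral_upper [CompleteSpace E] (hf : ContDiff ℝ 1 f)
    (c : ℝ) (p₀ : ℝ × ℝ) :
    HasFDerivAt (fun p : ℝ × ℝ => ∫ s in c..p.2, f (p.1, s))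
      ((ContinuousLinearMap.fst ℝ ℝ ℝ).smulRight (∫ s in c..p₀.2, fderiv ℝ f (p₀.1, s) (1, 0)) +
        (ContinuousLinearMap.snd ℝ ℝ ℝ).smulRight (f p₀)) p₀ := by
  have hslice : ∀ r, Continuous fun s => f (r, s) := fun r => hf.continuous.comp (.prodMk_right r)
  have hfixed := (hf.hasDerivAt_intervalIntegral_param c p₀.2 p₀.1).hasFDerivAt.comp p₀ hasFDerivAt_fst
  have hmoving := ((hslice p₀.1).integral_hasStrictDerivAt p₀.2 p₀.2).hasDerivAt.hasFDerivAt.comp p₀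
    hasFDerivAt_snd
  have hrem : HasFDerivAt (fun p : ℝ × ℝ => ∫ s in p₀.2..p.2, (f (p.1, s) - f (p₀.1, s)))
      (0 : ℝ × ℝ →L[ℝ] E) p₀ := by
    simpa [hasFDerivAt_iff_isLittleO] using hf.isLittleO_intervalIntegral_sub_param p₀
  have hsplit : ∀ p : ℝ × ℝ, ∫ s in c..p.2, f (p.1, s) = (∫ s in c..p₀.2, f (p.1, s)) +
      (∫ s in p₀.2..p.2, f (p₀.1, s)) + ∫ s in p₀.2..p.2, (f (p.1, s) - f (p₀.1, s)) := by
    intro p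
    rw [integral_sub ((hslice _).intervalIntegrable _ _) ((hslice _).intervalIntegrable _ _),
      add_add_sub_cancel, integral_add_adjacent_intervals ((hslice _).intervalIntegrable _ _)
      ((hslice _).intervalIntegrable _ _)]
  refine (((hfixed.add hmoving).add hrem).congr_fderiv ?_).congr_of_eventuallyEq
    (.of_forall hsplit)
  ext <;> simp

theorem integral_fderiv_fst_eq_of_deriv_fst_eq {τ a : ℝ × ℝ → ℝ} (hτ : ContDiff ℝ 1 τ)
    (ha : Continuous a) {r : ℝ}
    (hstruct : ∀ s : ℝ, deriv (fun r' => τ (r', s)) r =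
      a (r, s) - τ (r, s) + deriv (fun s' => s' * τ (r, s')) s) (y : ℝ) :
    ∫ s in (0:ℝ)..y, fderiv ℝ τ (r, s) (1, 0) =
      (∫ s in (0:ℝ)..y, a (r, s)) - (∫ s in (0:ℝ)..y, τ (r, s)) + y * τ (r, y) := by
  have hac : Continuous fun s => a (r, s) := by fun_prop
  have hτc : Continuous fun s => τ (r, s) := by fun_prop
  have hsub : Continuous fun s => a (r, s) - τ (r, s) := by fun_prop
  have hmul : ContDiff ℝ 1 fun s => s * τ (r, s) := by fun_prop
  calc ∫ s in (0:ℝ)..y, fderiv ℝ τ (r, s) (1, 0)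
      = ∫ s in (0:ℝ)..y, (a (r, s) - τ (r, s) + deriv (fun s' => s' * τ (r, s')) s) :=
        integral_congr fun s _ => by
          rw [← hstruct, ((hτ.differentiable one_ne_zero) _).hasDerivAt_comp_prodMk_left.deriv]
    _ = (∫ s in (0:ℝ)..y, a (r, s)) - (∫ s in (0:ℝ)..y, τ (r, s)) +
        ∫ s in (0:ℝ)..y, deriv (fun s' => s' * τ (r, s')) s := by
        rw [intervalIntegral.integral_add (hsub.intervalIntegrable _ _)
            ((hmul.continuous_deriv le_rfl).intervalIntegrable _ _),
          intervalIntegral.integral_sub (hac.intervalIntegrable _ _) (hτc.intervalIntegrable _ _)]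
    _ = _ := by
        rw [integral_deriv_eq_sub (fun s _ => hmul.differentiable one_ne_zero s)
          ((hmul.continuous_deriv le_rfl).intervalIntegrable _ _), zero_mul, sub_zero]

/-- (Abstract equation (eq:du).) Under the same structural hypotheses as in
Lemma 4.1, the derivative of the reparametrization cocycle satisfies
`u'(r) = -(τ(r,u(r)))⁻¹ (∫₀^{u(r)} a(r,s) ds - t) - u(r)`. -/
theorem deriv_timeChange_cocycle_eq
    (τ a : ℝ × ℝ → ℝ) (hτ : ContDiff ℝ 1 τ) (ha : ContDiff ℝ 1 a)
    (hτpos : ∀ p : ℝ × ℝ, 0 < τ p)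
    (hstruct : ∀ r s : ℝ,
      deriv (fun r' => τ (r', s)) r =
        a (r, s) - τ (r, s) + deriv (fun s' => s' * τ (r, s')) s)
    (t : ℝ) (u : ℝ → ℝ) (hu : Differentiable ℝ u)
    (hu_def : ∀ r : ℝ, t = ∫ s in (0:ℝ)..(u r), τ (r, s)) :
    ∀ r : ℝ,
      deriv u r = -(τ (r, u r))⁻¹ * ((∫ s in (0:ℝ)..(u r), a (r, s)) - t) - u r := by
  intro r₀
  have hchain := (hτ.hasFDerivAt_intervalIntegral_upper 0 (r₀, u r₀)).comp_hasDerivAt r₀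
    ((hasDerivAt_id' r₀).prodMk (hu r₀).hasDerivAt)
  have hconst : HasDerivAt (fun r => ∫ s in (0:ℝ)..u r, τ (r, s)) 0 r₀ :=
    (hasDerivAt_const r₀ t).congr_of_eventuallyEq (.of_forall fun r => (hu_def r).symm)
  have hzero : (∫ s in (0:ℝ)..u r₀, fderiv ℝ τ (r₀, s) (1, 0)) + deriv u r₀ * τ (r₀, u r₀) = 0 := by
    simpa [mul_comm] using hchain.unique hconst
  rw [integral_fderiv_fst_eq_of_deriv_fst_eq hτ ha.continuous (hstruct r₀), ← hu_def] at hzero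
  have := (hτpos (r₀, u r₀)).ne'
  field_simp
  linarith
end

section
/- Let m ≥ 1 and t ≥ 0. Let τ̃, a : ℝ × ℝ → ℝ be continuously differentiable and b : ℝ × ℝ → ℝ continuous, with m⁻¹ ≤ τ̃(r,s) ≤ m, |a(r,s)| ≤ m and |b(r,s)| ≤ m for all (r,s), and suppose that for all (r,s) ∈ ℝ²: ∂_r τ̃(r,s) = a(r,s) − τ̃(r,s) + ∂_s(s · τ̃(r,s)) and ∂_r a(r,s) = b(r,s) − a(r,s) + ∂_s(s · a(r,s)). Let u : ℝ → ℝ be differentiable with t = ∫₀^{u(r)} τ̃(r,s) ds and 0 ≤ u(r) ≤ m t for all r, and define v(r) = t − ∫₀^{u(r)} a(r,s) ds. Then |v'(r)| ≤ 6 m⁴ t for all r ∈ ℝ. -/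
/-!
Write `I_f(r) = ∫₀^{u(r)} f(r, s) ds`. The Leibniz rule and the structural identity
`∂_r f = g - f + ∂_s (s f)` give `I_f' = I_g - I_f + f(r, u) (u + u')`. For `f = τ` the left
side vanishes since `I_τ ≡ t`, so `τ(r, u) (u + u') = t - I_a = v`; this controls `u + u'`
through `τ ≥ m⁻¹`. For `f = a` it gives `v' = -(I_b - I_a + a(r, u) (u + u'))`, and each term
is `O(m⁴ t)` because `|I_a|, |I_b| ≤ m u ≤ m² t`.
-/

open MeasureTheory intervalIntegral

section Leibniz

variable {E : Type*} [NormedAddCommGroup E] [NormedSpace ℝ E]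
  {f f₁ : ℝ × ℝ → E}

theorem hasDerivAt_intervalIntegral_param (hf : Continuous f) (hf₁ : Continuous f₁)
    (hderiv : ∀ x s, HasDerivAt (fun x => f (x, s)) (f₁ (x, s)) x) (c d x₀ : ℝ) :
    HasDerivAt (fun x => ∫ s in c..d, f (x, s)) (∫ s in c..d, f₁ (x₀, s)) x₀ := by
  obtain ⟨K, hK⟩ :=
    ((isCompact_closedBall x₀ 1).prod isCompact_uIcc).exists_bound_of_continuousOn
      hf₁.continuousOn
  exact (hasDerivAt_integral_of_dominated_loc_of_deriv_le (bound := fun _ => K)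
    (Metric.ball_mem_nhds x₀ one_pos)
    (.of_forall fun x => (hf.comp (.prodMk_right x)).aestronglyMeasurable)
    ((hf.comp (.prodMk_right x₀)).intervalIntegrable _ _)
    (hf₁.comp (.prodMk_right x₀)).aestronglyMeasurable
    (.of_forall fun _ hs _ hx =>
      hK _ ⟨Metric.ball_subset_closedBall hx, Set.uIoc_subset_uIcc hs⟩)
    intervalIntegrable_const (.of_forall fun s _ x _ => hderiv x s)).2

theorem hasStrictFDerivAt_parametric_primitive [CompleteSpace E] (hf : Continuous f)
    (hf₁ : Continuous f₁)
    (hderiv : ∀ x s, HasDerivAt (fun x => f (x, s)) (f₁ (x, s)) x) (p : ℝ × ℝ) :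
    HasStrictFDerivAt (fun q : ℝ × ℝ => ∫ s in (0 : ℝ)..q.2, f (q.1, s))
      (((1 : ℝ →L[ℝ] ℝ).smulRight (∫ s in (0 : ℝ)..p.2, f₁ (p.1, s))).coprod
        ((1 : ℝ →L[ℝ] ℝ).smulRight (f p))) p := by
  have hcont : Continuous fun q : ℝ × ℝ => ∫ s in (0 : ℝ)..q.2, f₁ (q.1, s) :=
    continuous_parametric_primitive_of_continuous (f := fun x s => f₁ (x, s)) hf₁
  exact hasStrictFDerivAt_uncurry_coprod (f := fun x y => ∫ s in (0 : ℝ)..y, f (x, s))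
    (f₁ := fun x y => (1 : ℝ →L[ℝ] ℝ).smulRight (∫ s in (0 : ℝ)..y, f₁ (x, s)))
    (f₂ := fun x y => (1 : ℝ →L[ℝ] ℝ).smulRight (f (x, y)))
    (.of_forall fun q => (hasDerivAt_intervalIntegral_param hf hf₁ hderiv 0 q.2 q.1).hasFDerivAt)
    (.of_forall fun q =>
      ((hf.comp (.prodMk_right q.1)).integral_hasStrictDerivAt 0 q.2).hasDerivAt.hasFDerivAt)
    ((ContinuousLinearMap.smulRightL ℝ ℝ E 1).continuous.comp hcont).continuousAt
    ((ContinuousLinearMap.smulRightL ℝ ℝ E 1).continuous.comp hf).continuousAt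

theorem hasDerivAt_parametric_intervalIntegral [CompleteSpace E] (hf : Continuous f)
    (hf₁ : Continuous f₁)
    (hderiv : ∀ x s, HasDerivAt (fun x => f (x, s)) (f₁ (x, s)) x)
    {u : ℝ → ℝ} {u' r : ℝ} (hu : HasDerivAt u u' r) :
    HasDerivAt (fun r => ∫ s in (0 : ℝ)..u r, f (r, s))
      ((∫ s in (0 : ℝ)..u r, f₁ (r, s)) + u' • f (r, u r)) r := by
  simpa [Function.comp_def] using
    (hasStrictFDerivAt_parametric_primitive hf hf₁ hderiv (r, u r)).hasFDerivAt.comp_hasDerivAt r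
      ((hasDerivAt_id r).prodMk hu)

theorem ContDiff.continuous_deriv_fst (hf : ContDiff ℝ 1 f) :
    Continuous fun p : ℝ × ℝ => deriv (fun x => f (x, p.2)) p.1 := by
  have hfd : Differentiable ℝ f := hf.differentiable one_ne_zero
  have h : (fun p : ℝ × ℝ => deriv (fun x => f (x, p.2)) p.1) =
      fun p => fderiv ℝ f p (1, 0) :=
    funext fun p => ((hfd p).hasFDerivAt.comp_hasDerivAt p.1
      ((hasDerivAt_id p.1).prodMk (hasDerivAt_const p.1 p.2))).deriv
  rw [h]
  exact (hf.continuous_fderiv one_ne_zero).clm_apply continuous_const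

end Leibniz

theorem integral_deriv_id_mul {f : ℝ → ℝ} (hf : ContDiff ℝ 1 f) (y : ℝ) :
    ∫ s in (0 : ℝ)..y, deriv (fun s' => s' * f s') s = y * f y := by
  have hC1 : ContDiff ℝ 1 fun s => s * f s := contDiff_id.mul hf
  rw [integral_deriv_eq_sub (fun x _ => (hC1.differentiable one_ne_zero).differentiableAt)
    ((hC1.continuous_deriv le_rfl).intervalIntegrable _ _)]
  simp

/-- The term `∂_s (s f)` integrates to `u f(r, u)`, which joins the boundary term `f(r, u) u'`
of the Leibniz rule. -/
theorem hasDerivAt_integral_of_transport {f g : ℝ × ℝ → ℝ} (hf : ContDiff ℝ 1 f)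
    (hg : Continuous g)
    (hstruct : ∀ r s : ℝ, deriv (fun r' => f (r', s)) r =
      g (r, s) - f (r, s) + deriv (fun s' => s' * f (r, s')) s)
    {u : ℝ → ℝ} {u' r : ℝ} (hu : HasDerivAt u u' r) :
    HasDerivAt (fun r => ∫ s in (0 : ℝ)..u r, f (r, s))
      ((∫ s in (0 : ℝ)..u r, g (r, s)) - (∫ s in (0 : ℝ)..u r, f (r, s)) +
        f (r, u r) * (u r + u')) r := by
  have hfd : Differentiable ℝ f := hf.differentiable one_ne_zero
  have hfs : ContDiff ℝ 1 fun s => f (r, s) := hf.comp (contDiff_const.prodMk contDiff_id)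
  have hsfs : ContDiff ℝ 1 fun s => s * f (r, s) := contDiff_id.mul hfs
  have hint : ∀ {h : ℝ × ℝ → ℝ}, Continuous h →
      IntervalIntegrable (fun s => h (r, s)) volume 0 (u r) :=
    fun hh => (hh.comp (.prodMk_right r)).intervalIntegrable _ _
  have hpartial : ∫ s in (0 : ℝ)..u r, deriv (fun r' => f (r', s)) r =
      (∫ s in (0 : ℝ)..u r, g (r, s)) - (∫ s in (0 : ℝ)..u r, f (r, s)) +
        u r * f (r, u r) := by
    simp only [hstruct]
    rw [integral_add ((hint hg).sub (hint hf.continuous))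
        ((hsfs.continuous_deriv le_rfl).intervalIntegrable _ _),
      integral_sub (hint hg) (hint hf.continuous), integral_deriv_id_mul hfs]
  refine (hasDerivAt_parametric_intervalIntegral hf.continuous hf.continuous_deriv_fst
    (fun x s => (hfd.comp (differentiable_id.prodMk (differentiable_const s)) x).hasDerivAt)
    hu).congr_deriv ?_
  rw [hpartial, smul_eq_mul]
  ring

theorem abs_sub_add_mul_le_of_mul_eq {m t A B α τ w : ℝ} (hm : 1 ≤ m) (ht : 0 ≤ t)
    (hA : |A| ≤ m ^ 2 * t) (hB : |B| ≤ m ^ 2 * t) (hα : |α| ≤ m) (hτ : m⁻¹ ≤ τ)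
    (hw : τ * w = t - A) :
    |B - A + α * w| ≤ 6 * m ^ 4 * t := by
  have hτ₀ : 0 < τ := lt_of_lt_of_le (by positivity) hτ
  have hw_le : |w| ≤ m * (t + m ^ 2 * t) := calc
    |w| = m * (m⁻¹ * |w|) := by field_simp
    _ ≤ m * |τ * w| := by rw [abs_mul, abs_of_pos hτ₀]; gcongr
    _ ≤ m * (t + m ^ 2 * t) := by
      rw [hw]
      gcongr
      exact (abs_sub _ _).trans (by rw [abs_of_nonneg ht]; gcongr)
  have hm₂ : 1 ≤ m ^ 2 := one_le_pow₀ hm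
  calc |B - A + α * w| ≤ |B| + |A| + |α| * |w| := by
        rw [← abs_mul]
        exact (abs_add_le _ _).trans (add_le_add_left (abs_sub _ _) _)
    _ ≤ m ^ 2 * t + m ^ 2 * t + m * (m * (t + m ^ 2 * t)) := by gcongr
    _ ≤ 6 * m ^ 4 * t := by
        nlinarith [mul_le_mul_of_nonneg_right hm₂ (mul_nonneg ht (sq_nonneg m))]

theorem distortion_deriv_bound_general
    (m t : ℝ) (hm : 1 ≤ m) (ht : 0 ≤ t)
    (τ a b : ℝ × ℝ → ℝ)
    (hτ : ContDiff ℝ 1 τ) (ha : ContDiff ℝ 1 a) (hb : Continuous b)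
    (hτ_lb : ∀ p : ℝ × ℝ, m⁻¹ ≤ τ p)
    (ha_b : ∀ p : ℝ × ℝ, |a p| ≤ m) (hb_b : ∀ p : ℝ × ℝ, |b p| ≤ m)
    (hstruct₁ : ∀ r s : ℝ,
      deriv (fun r' => τ (r', s)) r =
        a (r, s) - τ (r, s) + deriv (fun s' => s' * τ (r, s')) s)
    (hstruct₂ : ∀ r s : ℝ,
      deriv (fun r' => a (r', s)) r =
        b (r, s) - a (r, s) + deriv (fun s' => s' * a (r, s')) s)
    (u : ℝ → ℝ) (hu : Differentiable ℝ u)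
    (hu_def : ∀ r : ℝ, t = ∫ s in (0:ℝ)..(u r), τ (r, s))
    (hu_bd : ∀ r : ℝ, 0 ≤ u r ∧ u r ≤ m * t)
    (v : ℝ → ℝ) (hv : ∀ r : ℝ, v r = t - ∫ s in (0:ℝ)..(u r), a (r, s)) :
    ∀ r : ℝ, |deriv v r| ≤ 6 * m ^ 4 * t := by
  intro r
  obtain ⟨hu₀, hu_le⟩ := hu_bd r
  have hI : ∀ g : ℝ × ℝ → ℝ, (∀ p, |g p| ≤ m) →
      |∫ s in (0:ℝ)..u r, g (r, s)| ≤ m ^ 2 * t :=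
    fun g hg => calc
      _ ≤ m * |u r - 0| := by
        simpa only [Real.norm_eq_abs] using
          norm_integral_le_of_norm_le_const (f := fun s => g (r, s)) fun s _ => hg (r, s)
      _ ≤ m * (m * t) := by rw [sub_zero, abs_of_nonneg hu₀]; gcongr
      _ = m ^ 2 * t := by ring
  have hflow : τ (r, u r) * (u r + deriv u r) = t - ∫ s in (0:ℝ)..u r, a (r, s) := by
    have h := hasDerivAt_integral_of_transport hτ ha.continuous hstruct₁ (hu r).hasDerivAt
    rw [show (fun r => ∫ s in (0:ℝ)..u r, τ (r, s)) = fun _ => t from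
      funext fun r => (hu_def r).symm] at h
    have h₀ := h.unique (hasDerivAt_const r t)
    rw [← hu_def r] at h₀
    linarith
  rw [show v = fun r => t - ∫ s in (0:ℝ)..u r, a (r, s) from funext hv,
    ((hasDerivAt_integral_of_transport ha hb hstruct₂ (hu r).hasDerivAt).const_sub t).deriv,
    abs_neg]
  exact abs_sub_add_mul_le_of_mul_eq hm ht (hI a ha_b) (hI b hb_b) (ha_b _) (hτ_lb _) hflow

/-- (Abstract Lemma 4.3, control on the distortion.) Under the structural
identities `∂_r τ = a - τ + ∂_s(s·τ)` and `∂_r a = b - a + ∂_s(s·a)`, with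
`m⁻¹ ≤ τ ≤ m`, `|a| ≤ m`, `|b| ≤ m`, `0 ≤ u ≤ m t` and `t = ∫₀^{u(r)} τ(r,s) ds`, the
function `v(r) = t - ∫₀^{u(r)} a(r,s) ds` satisfies `|v'(r)| ≤ 6 m⁴ t`. -/
theorem distortion_deriv_bound
    (m t : ℝ) (hm : 1 ≤ m) (ht : 0 ≤ t)
    (τ a b : ℝ × ℝ → ℝ)
    (hτ : ContDiff ℝ 1 τ) (ha : ContDiff ℝ 1 a) (hb : Continuous b)
    (hτ_lb : ∀ p : ℝ × ℝ, m⁻¹ ≤ τ p) (hτ_ub : ∀ p : ℝ × ℝ, τ p ≤ m)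
    (ha_b : ∀ p : ℝ × ℝ, |a p| ≤ m) (hb_b : ∀ p : ℝ × ℝ, |b p| ≤ m)
    (hstruct₁ : ∀ r s : ℝ,
      deriv (fun r' => τ (r', s)) r =
        a (r, s) - τ (r, s) + deriv (fun s' => s' * τ (r, s')) s)
    (hstruct₂ : ∀ r s : ℝ,
      deriv (fun r' => a (r', s)) r =
        b (r, s) - a (r, s) + deriv (fun s' => s' * a (r, s')) s)
    (u : ℝ → ℝ) (hu : Differentiable ℝ u)
    (hu_def : ∀ r : ℝ, t = ∫ s in (0:ℝ)..(u r), τ (r, s))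
    (hu_bd : ∀ r : ℝ, 0 ≤ u r ∧ u r ≤ m * t)
    (v : ℝ → ℝ) (hv : ∀ r : ℝ, v r = t - ∫ s in (0:ℝ)..(u r), a (r, s)) :
    ∀ r : ℝ, |deriv v r| ≤ 6 * m ^ 4 * t :=
  distortion_deriv_bound_general m t hm ht τ a b hτ ha hb hτ_lb ha_b hb_b hstruct₁ hstruct₂ u hu
    hu_def hu_bd v hv
end

section
/- Let (h_t)_{t∈ℝ} and (φ_r)_{r∈ℝ} be measurable flows on a probability space (M, μ) satisfying the commutation relation h_t(φ_r(x)) = φ_r(h_{e^r t}(x)) for all x ∈ M and t, r ∈ ℝ. Let m ≥ 1, let τ : M → ℝ be measurable with m⁻¹ ≤ τ ≤ m, and let u : M × ℝ → ℝ be the time-change cocycle for τ over (h_t). Let ψ : M → ℝ be measurable with |ψ(x)| ≤ m for all x and |ψ(φ_r(x)) − ψ(x)| ≤ m r for all x ∈ M and r ∈ [0,1]. Let 0 < γ < 1 and D ≥ 0, and suppose that for every T₀ ≥ 1 there is a measurable set E(T₀) ⊆ M with μ(E(T₀)) ≤ T₀^{-γ} such that |∫₀^L ψ(h_s(x)) ds|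 ≤ D L^{1-γ} for all L ≥ T₀ and all x ∉ E(T₀). For x ∈ M, r, t ∈ ℝ define v(x,r,t) = t − ∫₀^{u(φ_r(x), t)} ψ(h_s(φ_r(x))) ds. Then there exists a constant C_v ≥ 1, depending only on m, γ and D, such that for every t₀ ≥ 1 there is a measurable set E_v(t₀) ⊆ M with μ(E_v(t₀)) ≤ C_v t₀^{-γ} such that for all t ≥ t₀, all x ∈ M \ E_v(t₀) and all r ∈ [0,1]: |v(x,r,t) − t| ≤ C_v (r t + t^{1-γ}). -/
/-!
Write `U = u(φ_r x, t)`, so that `t/m ≤ U ≤ m t`. By the commutation relation,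
`ψ(h_s(φ_r x)) = ψ(φ_r(h_{e^r s} x))`, which differs from `ψ(h_{e^r s} x)` by at most `m r`;
this costs `m r U ≤ m² r t`. After the substitution `σ = e^r s`, what remains is at most the
ergodic integral of `ψ` along the orbit of `x` up to time `L = e^r U ≤ e m t`. Choosing
`T₀ = max 1 (t₀/m)` guarantees `L ≥ T₀` unless `L < 1`, so off `E(T₀)` this integral is
`O(t^{1-γ})`, while `μ(E(T₀)) ≤ T₀^{-γ} ≤ m t₀^{-γ}`.
-/

open MeasureTheory intervalIntegral Real

lemma Measurable.intervalIntegrable_of_abs_le {f : ℝ → ℝ} (hf : Measurable f) {C : ℝ}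
    (hC : ∀ s, |f s| ≤ C) (a b : ℝ) : IntervalIntegrable f volume a b :=
  intervalIntegrable_const.mono_fun' hf.aestronglyMeasurable (ae_of_all _ hC)

lemma pos_of_integral_pos {f : ℝ → ℝ} {U : ℝ} (hf : ∀ s, 0 ≤ f s)
    (h : 0 < ∫ s in (0:ℝ)..U, f s) : 0 < U := by
  by_contra! hU
  have := integral_nonneg (μ := volume) hU fun s _ => hf s
  rw [integral_symm] at h
  linarith

lemma mul_le_integral_le_mul {f : ℝ → ℝ} {a b U : ℝ} (hU : 0 ≤ U)
    (hf : IntervalIntegrable f volume 0 U) (ha : ∀ s, a ≤ f s) (hb : ∀ s, f s ≤ b) :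
    a * U ≤ ∫ s in (0:ℝ)..U, f s ∧ ∫ s in (0:ℝ)..U, f s ≤ b * U := by
  have hlo := integral_mono_on hU intervalIntegrable_const hf fun s _ => ha s
  have hhi := integral_mono_on hU hf intervalIntegrable_const fun s _ => hb s
  simp only [intervalIntegral.integral_const, sub_zero, smul_eq_mul] at hlo hhi
  constructor <;> linarith

lemma time_change_bounds {f : ℝ → ℝ} {m t U : ℝ} (hm : 0 < m) (hf : Measurable f)
    (hlo : ∀ s, m⁻¹ ≤ f s) (hhi : ∀ s, f s ≤ m) (ht : 0 < t)
    (hU : t = ∫ s in (0:ℝ)..U, f s) : 0 < U ∧ U ≤ m * t ∧ t ≤ m * U := by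
  have hm' : 0 < m⁻¹ := inv_pos.2 hm
  have hf_abs : ∀ s, |f s| ≤ m := fun s => abs_le.2 ⟨by linarith [hlo s], hhi s⟩
  have hU0 : 0 < U := pos_of_integral_pos (fun s => hm'.le.trans (hlo s)) (hU ▸ ht)
  obtain ⟨hlow, hupp⟩ :=
    mul_le_integral_le_mul hU0.le (hf.intervalIntegrable_of_abs_le hf_abs 0 U) hlo hhi
  rw [← hU] at hlow hupp
  refine ⟨hU0, ?_, by linarith⟩
  calc U = m * (m⁻¹ * U) := by field_simp
    _ ≤ m * t := by gcongr

lemma rpow_neg_le_mul_rpow_neg {m t₀ T γ : ℝ} (hm : 1 ≤ m) (ht₀ : 0 < t₀) (hγ0 : 0 ≤ γ)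
    (hγ1 : γ ≤ 1) (hT : t₀ / m ≤ T) : T ^ (-γ) ≤ m * t₀ ^ (-γ) := by
  have hm0 : 0 < m := one_pos.trans_le hm
  calc T ^ (-γ) ≤ (t₀ / m) ^ (-γ) :=
        rpow_le_rpow_of_nonpos (div_pos ht₀ hm0) hT (neg_nonpos.2 hγ0)
    _ = m ^ γ * t₀ ^ (-γ) := by
        rw [div_rpow ht₀.le hm0.le, rpow_neg hm0.le γ, div_inv_eq_mul, mul_comm]
    _ ≤ m * t₀ ^ (-γ) := by gcongr; exact rpow_le_self_of_one_le hm hγ1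

lemma mul_rpow_le_mul_rpow {K t p : ℝ} (hK : 1 ≤ K) (ht : 0 ≤ t) (hp : p ≤ 1) :
    (K * t) ^ p ≤ K * t ^ p := by
  rw [mul_rpow (zero_le_one.trans hK) ht]
  gcongr
  exact rpow_le_self_of_one_le hK hp

lemma abs_integral_le_of_forall_le_abs_integral_le {g : ℝ → ℝ} {m D γ T K L t : ℝ}
    (hg : ∀ s, |g s| ≤ m) (hD : 0 ≤ D) (hγ0 : 0 ≤ γ) (hγ1 : γ ≤ 1) (hK : 1 ≤ K)
    (herg : ∀ L, T ≤ L → |∫ s in (0:ℝ)..L, g s| ≤ D * L ^ (1 - γ))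
    (hL : 0 ≤ L) (hTL : T ≤ max 1 L) (hLt : L ≤ K * t) (ht : 1 ≤ t) :
    |∫ s in (0:ℝ)..L, g s| ≤ (D * K + m) * t ^ (1 - γ) := by
  have hm : 0 ≤ m := (abs_nonneg _).trans (hg 0)
  have ht_pow : 1 ≤ t ^ (1 - γ) := one_le_rpow ht (by linarith)
  have hDK : 0 ≤ D * K := mul_nonneg hD (by linarith)
  rcases le_or_gt T L with hTL' | hLT
  · calc |∫ s in (0:ℝ)..L, g s| ≤ D * L ^ (1 - γ) := herg L hTL'
      _ ≤ D * (K * t) ^ (1 - γ) := by gcongr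
      _ ≤ D * (K * t ^ (1 - γ)) := by
          gcongr; exact mul_rpow_le_mul_rpow hK (by linarith) (by linarith)
      _ ≤ (D * K + m) * t ^ (1 - γ) := by nlinarith
  · have hL1 : L ≤ 1 := by
      by_contra! h1
      rw [max_eq_right h1.le] at hTL
      linarith
    have hbound := norm_integral_le_of_norm_le_const (f := g) (a := 0) (b := L)
      fun s _ => (Real.norm_eq_abs _).trans_le (hg s)
    rw [Real.norm_eq_abs, sub_zero, abs_of_nonneg hL] at hbound
    calc |∫ s in (0:ℝ)..L, g s| ≤ m * L := hbound
      _ ≤ m * t ^ (1 - γ) := by nlinarith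
      _ ≤ (D * K + m) * t ^ (1 - γ) := by gcongr; linarith

section Flows

variable {M : Type*} [MeasurableSpace M] {h φ : ℝ → M → M} {ψ : M → ℝ} {m r U : ℝ}

lemma abs_integral_comp_flow_le (hh : Measurable (Function.uncurry h)) (hφ : Measurable (φ r))
    (hcomm : ∀ x t, h t (φ r x) = φ r (h (exp r * t) x)) (hψ : Measurable ψ)
    (hψm : ∀ x, |ψ x| ≤ m) (hψφ : ∀ x, |ψ (φ r x) - ψ x| ≤ m * r) (hr : 0 ≤ r) (hU : 0 ≤ U)
    (x : M) :
    |∫ s in (0:ℝ)..U, ψ (h s (φ r x))| ≤ m * r * U + |∫ s in (0:ℝ)..exp r * U, ψ (h s x)| := by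
  set c := exp r
  have hc : 1 ≤ c := one_le_exp hr
  have horbit : Measurable fun s => h (c * s) x :=
    hh.of_uncurry_right.comp (measurable_const_mul c)
  have hsheared : IntervalIntegrable (fun s => ψ (φ r (h (c * s) x))) volume 0 U :=
    ((hψ.comp hφ).comp horbit).intervalIntegrable_of_abs_le (fun s => hψm _) 0 U
  have hplain : IntervalIntegrable (fun s => ψ (h (c * s) x)) volume 0 U :=
    (hψ.comp horbit).intervalIntegrable_of_abs_le (fun s => hψm _) 0 U
  have hdiff := norm_integral_le_of_norm_le_const (a := 0) (b := U)
    (f := fun s => ψ (φ r (h (c * s) x)) - ψ (h (c * s) x))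
    fun s _ => (Real.norm_eq_abs _).trans_le (hψφ (h (c * s) x))
  rw [Real.norm_eq_abs, sub_zero, abs_of_nonneg hU] at hdiff
  have hrescale : |∫ s in (0:ℝ)..U, ψ (h (c * s) x)| ≤ |∫ s in (0:ℝ)..c * U, ψ (h s x)| := by
    rw [integral_comp_mul_left (fun s => ψ (h s x)) (by positivity), mul_zero, smul_eq_mul,
      abs_mul, abs_inv, abs_of_pos (by positivity)]
    exact mul_le_of_le_one_left (abs_nonneg _) (inv_le_one_of_one_le₀ hc)
  calc |∫ s in (0:ℝ)..U, ψ (h s (φ r x))|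
      = |(∫ s in (0:ℝ)..U, (ψ (φ r (h (c * s) x)) - ψ (h (c * s) x)))
          + ∫ s in (0:ℝ)..U, ψ (h (c * s) x)| := by
        simp only [hcomm]
        rw [integral_sub hsheared hplain, sub_add_cancel]
    _ ≤ _ := abs_add_le _ _
    _ ≤ m * r * U + |∫ s in (0:ℝ)..c * U, ψ (h s x)| := add_le_add hdiff hrescale

end Flows

/-- (Abstract Lemma 4.2, control on the shear.) Given commuting flows
`h_t ∘ φ_r = φ_r ∘ h_{e^r t}`, a time-change cocycle `u` for `τ` with `m⁻¹ ≤ τ ≤ m`, and a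
bounded observable `ψ` whose ergodic integrals satisfy a polynomial bound off sets of small
measure, the shear function `v(x,r,t) = t - ∫₀^{u(φ_r x, t)} ψ(h_s(φ_r x)) ds` satisfies
`|v(x,r,t) - t| ≤ C_v (r t + t^{1-γ})` off a set of measure `≤ C_v t₀^{-γ}`, where `C_v ≥ 1`
depends only on `m`, `γ` and `D`. -/
theorem shear_control
    (m γ D : ℝ) (hm : 1 ≤ m) (hγ : 0 < γ) (hγ' : γ < 1) (hD : 0 ≤ D) :
    ∃ Cv : ℝ, 1 ≤ Cv ∧
      ∀ (M : Type*) (_ : MeasurableSpace M) (μ : Measure M),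
        IsProbabilityMeasure μ →
        ∀ h φ : ℝ → M → M,
          (∀ t : ℝ, Measurable (h t)) → h 0 = id →
          (∀ t s : ℝ, h (t + s) = h t ∘ h s) → Measurable (Function.uncurry h) →
          (∀ r : ℝ, Measurable (φ r)) → φ 0 = id →
          (∀ r s : ℝ, φ (r + s) = φ r ∘ φ s) → Measurable (Function.uncurry φ) →
          (∀ (x : M) (t r : ℝ), h t (φ r x) = φ r (h (Real.exp r * t) x)) →
          ∀ τ : M → ℝ, Measurable τ → (∀ x, m⁻¹ ≤ τ x) → (∀ x, τ x ≤ m) →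
          ∀ u : M → ℝ → ℝ,
            (∀ (x : M) (t : ℝ), t = ∫ s in (0:ℝ)..(u x t), τ (h s x)) →
          ∀ ψ : M → ℝ, Measurable ψ → (∀ x, |ψ x| ≤ m) →
            (∀ x : M, ∀ r ∈ Set.Icc (0:ℝ) 1, |ψ (φ r x) - ψ x| ≤ m * r) →
            (∀ T₀ : ℝ, 1 ≤ T₀ →
              ∃ E : Set M, MeasurableSet E ∧ μ E ≤ ENNReal.ofReal (T₀ ^ (-γ)) ∧
                ∀ L : ℝ, T₀ ≤ L → ∀ x ∉ E,
                  |∫ s in (0:ℝ)..L, ψ (h s x)| ≤ D * L ^ (1 - γ)) →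
            ∀ t₀ : ℝ, 1 ≤ t₀ →
              ∃ Ev : Set M, MeasurableSet Ev ∧
                μ Ev ≤ ENNReal.ofReal (Cv * t₀ ^ (-γ)) ∧
                ∀ t : ℝ, t₀ ≤ t → ∀ x ∉ Ev, ∀ r ∈ Set.Icc (0:ℝ) 1,
                  |(t - ∫ s in (0:ℝ)..(u (φ r x) t), ψ (h s (φ r x))) - t| ≤
                    Cv * (r * t + t ^ (1 - γ)) := by
  have hm0 : 0 < m := one_pos.trans_le hm
  have hem : 1 ≤ exp 1 * m := one_le_mul_of_one_le_of_one_le (one_le_exp zero_le_one) hm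
  have hDe : 0 ≤ D * (exp 1 * m) := by positivity
  refine ⟨m ^ 2 + (D * (exp 1 * m) + m), by nlinarith, ?_⟩
  intro M _ μ _ h φ _ _ _ hh hφ _ _ _ hcomm τ hτ hτlo hτhi u hu ψ hψ hψm hψφ herg t₀ ht₀
  obtain ⟨E, hE, hEμ, hEerg⟩ := herg (max 1 (t₀ / m)) (le_max_left _ _)
  refine ⟨E, hE, hEμ.trans (ENNReal.ofReal_le_ofReal ?_), fun t ht x hx r hr => ?_⟩
  · calc max 1 (t₀ / m) ^ (-γ) ≤ m * t₀ ^ (-γ) :=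
          rpow_neg_le_mul_rpow_neg hm (by linarith) hγ.le hγ'.le (le_max_right _ _)
      _ ≤ _ := by gcongr; nlinarith
  set U := u (φ r x) t
  obtain ⟨hU0, hUt, htU⟩ := time_change_bounds hm0 (hτ.comp hh.of_uncurry_right)
    (fun s => hτlo _) (fun s => hτhi _) (by linarith) (hu (φ r x) t)
  have hshear := abs_integral_comp_flow_le hh (hφ r) (fun y s => hcomm y s r) hψ hψm
    (fun y => hψφ y r hr) hr.1 hU0.le x
  have hU_le : exp r * U ≤ exp 1 * m * t := by
    rw [mul_assoc]; exact mul_le_mul (exp_le_exp.2 hr.2) hUt hU0.le (exp_pos 1).le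
  have hU_ge : t₀ / m ≤ exp r * U := by
    rw [div_le_iff₀ hm0]; nlinarith [one_le_exp hr.1]
  have hergodic := abs_integral_le_of_forall_le_abs_integral_le (fun s => hψm (h s x)) hD
    hγ.le hγ'.le hem (fun L hL => hEerg L hL x hx) (by positivity) (max_le_max le_rfl hU_ge)
    hU_le (by linarith)
  have hrU : m * r * U ≤ m ^ 2 * (r * t) := by nlinarith [mul_nonneg hm0.le hr.1]
  have hrt : 0 ≤ r * t := mul_nonneg hr.1 (by linarith)
  have htγ : 0 ≤ t ^ (1 - γ) := rpow_nonneg (by linarith) _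
  rw [sub_sub_cancel_left, abs_neg]
  calc _ ≤ m ^ 2 * (r * t) + (D * (exp 1 * m) + m) * t ^ (1 - γ) := by linarith
    _ ≤ _ := by nlinarith [mul_nonneg (sq_nonneg m) htγ]
end

section
/- Let (φ_s)_{s∈ℝ} be a measurable measure-preserving flow on a probability space (M, μ). Let F ∈ L²(M, μ) ∩ L^∞(M, μ) be real-valued, and let G, DG ∈ L²(M, μ) be real-valued functions such that for every s ∈ ℝ and μ-almost every x ∈ M: G(φ_s(x)) = G(x) + ∫₀^s DG(φ_r(x)) dr. For s ≥ 0 define A_s F(x) = ∫₀^s F(φ_r(x)) dr. Then for every σ > 0: |∫_M F · G dμ| ≤ ( ‖G‖₂ + σ ‖DG‖₂ ) · (1/σ) · sup_{s ∈ [0,σ]} ‖A_s F‖₂. -/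
/-! For `0 ≤ s`, invariance of `μ` under `φ_s` and the cocycle identity give
`∫ F G = ∫ (F ∘ φ_s) G + ∫ (F ∘ φ_s) (A_s DG)`; Fubini, invariance under `φ_r` and the
substitution `r ↦ s - r` turn the last term into `∫ (A_s F) DG`. Averaging over `s ∈ (0, σ]` and
applying Fubini once more, `σ ∫ F G = ∫ (A_σ F) G + ∫₀^σ ∫ (A_s F) DG ds`, and Cauchy–Schwarz
bounds both terms by `sup_{s ≤ σ} ‖A_s F‖₂` times `‖G‖₂`, resp. `σ ‖DG‖₂`. -/

open MeasureTheory intervalIntegral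
open scoped ENNReal
open Set Function

namespace MeasureTheory

variable {α β : Type*} [MeasurableSpace α] [MeasurableSpace β] {μ : Measure α}

theorem enorm_integral_mul_le_eLpNorm_mul_eLpNorm {f g : α → ℝ} (hf : AEStronglyMeasurable f μ)
    (hg : AEStronglyMeasurable g μ) :
    ‖∫ x, f x * g x ∂μ‖ₑ ≤ eLpNorm f 2 μ * eLpNorm g 2 μ :=
  calc ‖∫ x, f x * g x ∂μ‖ₑ ≤ eLpNorm (f • g) 1 μ := by
        rw [eLpNorm_one_eq_lintegral_enorm]
        exact enorm_integral_le_lintegral_enorm _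
    _ ≤ eLpNorm f 2 μ * eLpNorm g 2 μ := eLpNorm_smul_le_mul_eLpNorm hg hf

theorem MeasurePreserving.integral_comp_of_aestronglyMeasurable_s10 {ν : Measure β} {f : α → β}
    (hf : MeasurePreserving f μ ν) {g : β → ℝ} (hg : AEStronglyMeasurable g ν) :
    ∫ x, g (f x) ∂μ = ∫ y, g y ∂ν := by
  rw [← hf.map_eq] at hg ⊢
  exact (integral_map hf.aemeasurable hg).symm

theorem MemLp.comp_snd_prod {E : Type*} [NormedAddCommGroup E] {p : ℝ≥0∞} {f : α → E}
    (hf : MemLp f p μ) (ν : Measure β) [IsFiniteMeasure ν] [SFinite μ] :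
    MemLp (fun q : β × α => f q.2) p (ν.prod μ) :=
  MemLp.comp_of_map (by rw [Measure.map_snd_prod]; exact hf.smul_measure (measure_ne_top ν univ))
    measurable_snd.aemeasurable

end MeasureTheory

section Flow

variable {M : Type*} {φ : ℝ → M → M}

/-- The paper's `A_s f`. -/
noncomputable def flowIntegral (φ : ℝ → M → M) (f : M → ℝ) (s : ℝ) (x : M) : ℝ :=
  ∫ r in (0:ℝ)..s, f (φ r x)

theorem flowIntegral_eq_setIntegral (f : M → ℝ) {s : ℝ} (hs : 0 ≤ s) (x : M) :
    flowIntegral φ f s x = ∫ r in Ioc 0 s, f (φ r x) :=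
  integral_of_le hs

variable [MeasurableSpace M] {μ : Measure M}

theorem integral_comp_flow_mul_comp_flow (h_add : ∀ s r, φ (s + r) = φ s ∘ φ r)
    (hμ : ∀ s, MeasurePreserving (φ s) μ μ) {f g : M → ℝ} (hf : AEStronglyMeasurable f μ)
    (hg : AEStronglyMeasurable g μ) (s r : ℝ) :
    ∫ x, f (φ s x) * g (φ r x) ∂μ = ∫ y, f (φ (s - r) y) * g y ∂μ := by
  rw [← (hμ r).integral_comp_of_aestronglyMeasurable_s10 (g := fun y => f (φ (s - r) y) * g y)
    ((hf.comp_measurePreserving (hμ (s - r))).mul hg)]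
  simp only [← comp_apply (f := φ (s - r)), ← h_add, sub_add_cancel]

variable [SFinite μ]

theorem map_prod_uncurry_flow (hφ : Measurable (uncurry φ))
    (hμ : ∀ s, MeasurePreserving (φ s) μ μ) (ν : Measure ℝ) [SFinite ν] :
    (ν.prod μ).map (uncurry φ) = ν univ • μ := by
  ext A hA
  rw [Measure.map_apply hφ hA, Measure.prod_apply (hφ hA)]
  simp only [preimage_preimage, uncurry_apply_pair, (hμ _).measure_preimage hA.nullMeasurableSet,
    lintegral_const, Measure.smul_apply, smul_eq_mul, mul_comm]

theorem quasiMeasurePreserving_uncurry_flow (hφ : Measurable (uncurry φ))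
    (hμ : ∀ s, MeasurePreserving (φ s) μ μ) (ν : Measure ℝ) [SFinite ν] :
    Measure.QuasiMeasurePreserving (uncurry φ) (ν.prod μ) μ :=
  ⟨hφ, by rw [map_prod_uncurry_flow hφ hμ]; exact Measure.smul_absolutelyContinuous⟩

theorem MeasureTheory.MemLp.comp_uncurry_flow {E : Type*} [NormedAddCommGroup E] {p : ℝ≥0∞}
    {f : M → E} (hf : MemLp f p μ) (hφ : Measurable (uncurry φ))
    (hμ : ∀ s, MeasurePreserving (φ s) μ μ) (ν : Measure ℝ) [IsFiniteMeasure ν] :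
    MemLp (fun q : ℝ × M => f (φ q.1 q.2)) p (ν.prod μ) :=
  MemLp.comp_of_map (f := uncurry φ)
    (by rw [map_prod_uncurry_flow hφ hμ]; exact hf.smul_measure (measure_ne_top ν univ))
    hφ.aemeasurable

theorem aestronglyMeasurable_flowIntegral (hφ : Measurable (uncurry φ))
    (hμ : ∀ s, MeasurePreserving (φ s) μ μ) {f : M → ℝ} (hf : AEStronglyMeasurable f μ) {s : ℝ}
    (hs : 0 ≤ s) : AEStronglyMeasurable (flowIntegral φ f s) μ := by
  have := (hf.comp_quasiMeasurePreserving (quasiMeasurePreserving_uncurry_flow hφ hμ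
    (volume.restrict (Ioc 0 s)))).prod_swap.integral_prod_right'
  simpa only [funext (flowIntegral_eq_setIntegral f hs), comp_apply, Prod.swap_prod_mk,
    uncurry_apply_pair] using this

theorem integrable_comp_uncurry_flow_mul (hφ : Measurable (uncurry φ))
    (hμ : ∀ s, MeasurePreserving (φ s) μ μ) {f g : M → ℝ} (hf : MemLp f 2 μ) (hg : MemLp g 2 μ)
    (ν : Measure ℝ) [IsFiniteMeasure ν] :
    Integrable (fun q : ℝ × M => f (φ q.1 q.2) * g q.2) (ν.prod μ) :=
  (hf.comp_uncurry_flow hφ hμ ν).integrable_mul (hg.comp_snd_prod ν)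

theorem integral_flowIntegral_mul (hφ : Measurable (uncurry φ))
    (hμ : ∀ s, MeasurePreserving (φ s) μ μ) {f g : M → ℝ} (hf : MemLp f 2 μ) (hg : MemLp g 2 μ)
    {s : ℝ} (hs : 0 ≤ s) :
    ∫ x, flowIntegral φ f s x * g x ∂μ = ∫ r in Ioc 0 s, ∫ x, f (φ r x) * g x ∂μ := by
  rw [integral_integral_swap (integrable_comp_uncurry_flow_mul hφ hμ hf hg _)]
  simp only [flowIntegral_eq_setIntegral f hs, ← MeasureTheory.integral_mul_const]

theorem integral_comp_flow_mul_flowIntegral (h_add : ∀ s r, φ (s + r) = φ s ∘ φ r)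
    (hφ : Measurable (uncurry φ)) (hμ : ∀ s, MeasurePreserving (φ s) μ μ) {f g : M → ℝ}
    (hf : MemLp f 2 μ) (hg : MemLp g 2 μ) {s : ℝ} (hs : 0 ≤ s) :
    ∫ x, f (φ s x) * flowIntegral φ g s x ∂μ = ∫ x, flowIntegral φ f s x * g x ∂μ := by
  have hint : Integrable (fun q : ℝ × M => f (φ s q.2) * g (φ q.1 q.2))
      ((volume.restrict (Ioc 0 s)).prod μ) :=
    ((hf.comp_measurePreserving (hμ s)).comp_snd_prod _).integrable_mul
      (hg.comp_uncurry_flow hφ hμ _)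
  calc ∫ x, f (φ s x) * flowIntegral φ g s x ∂μ
      = ∫ x, (∫ r in Ioc 0 s, f (φ s x) * g (φ r x)) ∂μ := by
        simp only [flowIntegral_eq_setIntegral g hs, MeasureTheory.integral_const_mul]
    _ = ∫ r in Ioc 0 s, ∫ x, f (φ s x) * g (φ r x) ∂μ := (integral_integral_swap hint).symm
    _ = ∫ r in Ioc 0 s, ∫ y, f (φ (s - r) y) * g y ∂μ := by
        simp only [integral_comp_flow_mul_comp_flow h_add hμ hf.1 hg.1]
    _ = ∫ u in Ioc 0 s, ∫ y, f (φ u y) * g y ∂μ := by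
        rw [← integral_of_le hs, ← integral_of_le hs,
          integral_comp_sub_left (fun u => ∫ y, f (φ u y) * g y ∂μ), sub_self, sub_zero]
    _ = ∫ x, flowIntegral φ f s x * g x ∂μ := (integral_flowIntegral_mul hφ hμ hf hg hs).symm

theorem integral_mul_eq_integral_comp_flow_mul_add (h_add : ∀ s r, φ (s + r) = φ s ∘ φ r)
    (hφ : Measurable (uncurry φ)) (hμ : ∀ s, MeasurePreserving (φ s) μ μ) {F G DG : M → ℝ}
    (hF : MemLp F 2 μ) (hG : MemLp G 2 μ) (hDG : MemLp DG 2 μ) {s : ℝ} (hs : 0 ≤ s)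
    (hcoc : ∀ᵐ x ∂μ, G (φ s x) = G x + flowIntegral φ DG s x) :
    ∫ x, F x * G x ∂μ = ∫ x, F (φ s x) * G x ∂μ + ∫ x, flowIntegral φ F s x * DG x ∂μ := by
  have hFs := hF.comp_measurePreserving (hμ s)
  have hshear : ∫ x, F (φ s x) * flowIntegral φ DG s x ∂μ
      = ∫ x, F (φ s x) * G (φ s x) ∂μ - ∫ x, F (φ s x) * G x ∂μ := by
    rw [← integral_sub (f := fun x => F (φ s x) * G (φ s x)) (g := fun x => F (φ s x) * G x)
      (hFs.integrable_mul (hG.comp_measurePreserving (hμ s))) (hFs.integrable_mul hG)]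
    refine integral_congr_ae (hcoc.mono fun x hx => ?_)
    dsimp only
    rw [hx]
    ring
  rw [← integral_comp_flow_mul_flowIntegral h_add hφ hμ hF hDG hs, hshear,
    (hμ s).integral_comp_of_aestronglyMeasurable_s10 (g := fun y => F y * G y) (hF.1.mul hG.1)]
  ring

end Flow

theorem enorm_le_of_setIntegral_Ioc_le_of_sub_le {σ : ℝ} (hσ : 0 < σ) {c : ℝ} {T : ℝ → ℝ}
    (hT : IntegrableOn T (Ioc 0 σ)) {a b : ℝ≥0∞} (ha : ‖∫ s in Ioc 0 σ, T s‖ₑ ≤ a)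
    (hb : ∀ s ∈ Ioc 0 σ, ‖c - T s‖ₑ ≤ b) :
    ‖c‖ₑ ≤ (a + ENNReal.ofReal σ * b) * (ENNReal.ofReal σ)⁻¹ := by
  have hsplit : σ * c = (∫ s in Ioc 0 σ, T s) + ∫ s in Ioc 0 σ, (c - T s) := by
    rw [← MeasureTheory.integral_add (g := fun s => c - T s) hT ((integrable_const c).sub hT)]
    simp [hσ.le]
  have hrest : ‖∫ s in Ioc 0 σ, (c - T s)‖ₑ ≤ ENNReal.ofReal σ * b :=
    calc ‖∫ s in Ioc 0 σ, (c - T s)‖ₑ ≤ ∫⁻ s in Ioc 0 σ, ‖c - T s‖ₑ :=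
          enorm_integral_le_lintegral_enorm _
      _ ≤ ∫⁻ _ in Ioc 0 σ, b := setLIntegral_mono measurable_const hb
      _ = ENNReal.ofReal σ * b := by simp [mul_comm]
  have hσc : ENNReal.ofReal σ * ‖c‖ₑ ≤ a + ENNReal.ofReal σ * b := by
    calc ENNReal.ofReal σ * ‖c‖ₑ = ‖σ * c‖ₑ := by rw [enorm_mul, Real.enorm_of_nonneg hσ.le]
      _ ≤ a + ENNReal.ofReal σ * b := hsplit ▸ (enorm_add_le _ _).trans (add_le_add ha hrest)
  rw [← div_eq_mul_inv, ENNReal.le_div_iff_mul_le (by simp [hσ]) (by simp), mul_comm]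
  exact hσc

theorem mixing_via_shearing_general
    {M : Type*} [MeasurableSpace M] (μ : Measure M) [IsProbabilityMeasure μ]
    (φ : ℝ → M → M)
    (h_add : ∀ s r : ℝ, φ (s + r) = φ s ∘ φ r)
    (h_joint : Measurable (Function.uncurry φ))
    (h_mp : ∀ s : ℝ, MeasurePreserving (φ s) μ μ)
    (F G DG : M → ℝ)
    (hF2 : MemLp F 2 μ)
    (hG : MemLp G 2 μ) (hDG : MemLp DG 2 μ)
    (hGcoc : ∀ s : ℝ, ∀ᵐ x ∂μ, G (φ s x) = G x + ∫ r in (0:ℝ)..s, DG (φ r x)) :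
    ∀ σ : ℝ, 0 < σ →
      ENNReal.ofReal |∫ x, F x * G x ∂μ| ≤
        (eLpNorm G 2 μ + ENNReal.ofReal σ * eLpNorm DG 2 μ) * (ENNReal.ofReal σ)⁻¹ *
          ⨆ s ∈ Set.Icc (0:ℝ) σ,
            eLpNorm (fun x => ∫ r in (0:ℝ)..s, F (φ r x)) 2 μ := by
  intro σ hσ
  set S := ⨆ s ∈ Icc (0:ℝ) σ, eLpNorm (fun x => ∫ r in (0:ℝ)..s, F (φ r x)) 2 μ
  have hAS : ∀ s ∈ Icc (0:ℝ) σ, eLpNorm (flowIntegral φ F s) 2 μ ≤ S := fun s hs =>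
    le_biSup (fun s => eLpNorm (flowIntegral φ F s) 2 μ) hs
  have hCS : ∀ {g : M → ℝ}, MemLp g 2 μ → ∀ s ∈ Icc (0:ℝ) σ,
      ‖∫ x, flowIntegral φ F s x * g x ∂μ‖ₑ ≤ S * eLpNorm g 2 μ := fun hg s hs =>
    (enorm_integral_mul_le_eLpNorm_mul_eLpNorm
      (aestronglyMeasurable_flowIntegral h_joint h_mp hF2.1 hs.1) hg.1).trans
      (mul_le_mul_left (hAS s hs) _)
  rw [← Real.enorm_eq_ofReal_abs]
  refine (enorm_le_of_setIntegral_Ioc_le_of_sub_le hσ (T := fun s => ∫ x, F (φ s x) * G x ∂μ)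
    (a := S * eLpNorm G 2 μ) (b := S * eLpNorm DG 2 μ)
    (integrable_comp_uncurry_flow_mul h_joint h_mp hF2 hG _).integral_prod_left
    ?_ fun s hs => ?_).trans_eq (by ring)
  · rw [← integral_flowIntegral_mul h_joint h_mp hF2 hG hσ.le]
    exact hCS hG σ ⟨hσ.le, le_rfl⟩
  · rw [integral_mul_eq_integral_comp_flow_mul_add h_add h_joint h_mp hF2 hG hDG hs.1.le
      (hGcoc s), add_sub_cancel_left]
    exact hCS hDG s (Ioc_subset_Icc_self hs)

/-- (Abstract Lemma 5.1, mixing via shearing.) For a measure-preserving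
flow `(φ_s)` on a probability space, `F ∈ L² ∩ L^∞`, and `G, DG ∈ L²` with
`G ∘ φ_s = G + ∫₀^s DG ∘ φ_r dr` a.e., one has, for every `σ > 0`,
`|∫ F G dμ| ≤ (‖G‖₂ + σ ‖DG‖₂) σ⁻¹ sup_{s ∈ [0,σ]} ‖A_s F‖₂`, where
`A_s F(x) = ∫₀^s F(φ_r x) dr`. -/
theorem mixing_via_shearing
    {M : Type*} [MeasurableSpace M] (μ : Measure M) [IsProbabilityMeasure μ]
    (φ : ℝ → M → M)
    (hmeas : ∀ s : ℝ, Measurable (φ s))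
    (h_zero : φ 0 = id)
    (h_add : ∀ s r : ℝ, φ (s + r) = φ s ∘ φ r)
    (h_joint : Measurable (Function.uncurry φ))
    (h_mp : ∀ s : ℝ, MeasurePreserving (φ s) μ μ)
    (F G DG : M → ℝ)
    (hF2 : MemLp F 2 μ) (hFinf : MemLp F ⊤ μ)
    (hG : MemLp G 2 μ) (hDG : MemLp DG 2 μ)
    (hGcoc : ∀ s : ℝ, ∀ᵐ x ∂μ, G (φ s x) = G x + ∫ r in (0:ℝ)..s, DG (φ r x)) :
    ∀ σ : ℝ, 0 < σ →
      ENNReal.ofReal |∫ x, F x * G x ∂μ| ≤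
        (eLpNorm G 2 μ + ENNReal.ofReal σ * eLpNorm DG 2 μ) * (ENNReal.ofReal σ)⁻¹ *
          ⨆ s ∈ Set.Icc (0:ℝ) σ,
            eLpNorm (fun x => ∫ r in (0:ℝ)..s, F (φ r x)) 2 μ :=
  mixing_via_shearing_general μ φ h_add h_joint h_mp F G DG hF2 hG hDG hGcoc
end

section
/- Let t > 0, σ > 0, C' ≥ 0 and K ≥ 0. Let v : [0,σ] → ℝ be differentiable with |v(r)| ≥ t/2 and |d/dr(e^{-r}/v(r))| ≤ C'/t for all r ∈ [0,σ], let τ̃ : [0,σ] → ℝ be continuous and positive, let w : [0,σ] → ℝ be differentiable with w'(r) = e^r v(r)/τ̃(r) for all r ∈ [0,σ], and let G : ℝ → ℝ be continuous with |∫_{w(0)}^{w(r)} G(ℓ) dℓ| ≤ K for all r ∈ [0,σ]. Then for every s ∈ [0,σ]: | ∫₀^s G(w(r))/τ̃(r) dr | ≤ (2 + σ C') K / t. -/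
/-!
Since `w' = eʳ v / τ`, the integrand factors as `G(w r) / τ r = (e⁻ʳ / v r) · F'(r)` with
`F(r) = ∫_{w 0}^{w r} G`. Integrating by parts moves the derivative onto the shear factor
`e⁻ʳ / v`: the boundary term is at most `(2 / t) K` because `|v| ≥ t / 2`, and the remaining
integral is at most `σ (C' / t) K`.
-/

open MeasureTheory Set intervalIntegral

lemma Measurable.intervalIntegrable_of_abs_le_s13 {f : ℝ → ℝ} {a b B : ℝ} (hf : Measurable f)
    (hab : a ≤ b) (hB : ∀ r ∈ Icc a b, |f r| ≤ B) : IntervalIntegrable f volume a b := by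
  refine (intervalIntegrable_const (c := B)).mono_fun' hf.aestronglyMeasurable ?_
  rw [Filter.EventuallyLE, ae_restrict_iff' measurableSet_uIoc]
  filter_upwards with r hr
  rw [uIoc_of_le hab] at hr
  exact hB r (Ioc_subset_Icc_self hr)

lemma abs_integral_mul_deriv_le {p F f : ℝ → ℝ} {a b A B M : ℝ} (hab : a ≤ b)
    (hp : ∀ r ∈ Icc a b, DifferentiableAt ℝ p r) (hF : ∀ r ∈ Icc a b, HasDerivAt F (f r) r)
    (hf : IntervalIntegrable f volume a b) (hFa : F a = 0)
    (hpb : |p b| ≤ A) (hp' : ∀ r ∈ Icc a b, |deriv p r| ≤ B) (hFM : ∀ r ∈ Icc a b, |F r| ≤ M) :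
    |∫ r in a..b, p r * f r| ≤ A * M + (b - a) * (B * M) := by
  have hb : b ∈ Icc a b := right_mem_Icc.2 hab
  have hibp := integral_mul_deriv_eq_deriv_mul
    (fun r hr ↦ (hp r (uIcc_of_le hab ▸ hr)).hasDerivAt) (fun r hr ↦ hF r (uIcc_of_le hab ▸ hr))
    ((measurable_deriv p).intervalIntegrable_of_abs_le_s13 hab hp') hf
  have hboundary : |p b * F b| ≤ A * M :=
    abs_mul (p b) (F b) ▸ mul_le_mul hpb (hFM b hb) (abs_nonneg _) ((abs_nonneg _).trans hpb)
  have hbulk : |∫ r in a..b, deriv p r * F r| ≤ (B * M) * |b - a| := by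
    rw [← Real.norm_eq_abs]
    refine intervalIntegral.norm_integral_le_of_norm_le_const fun r hr ↦ ?_
    rw [uIoc_of_le hab] at hr
    have hr : r ∈ Icc a b := Ioc_subset_Icc_self hr
    rw [Real.norm_eq_abs, abs_mul]
    exact mul_le_mul (hp' r hr) (hFM r hr) (abs_nonneg _) ((abs_nonneg _).trans (hp' r hr))
  rw [hibp, hFa, mul_zero, sub_zero]
  rw [abs_of_nonneg (sub_nonneg.2 hab)] at hbulk
  calc _ ≤ |p b * F b| + |∫ r in a..b, deriv p r * F r| := abs_sub _ _
    _ ≤ A * M + (b - a) * (B * M) := by linarith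

lemma hasDerivAt_integral_comp {G w : ℝ → ℝ} {c w' r : ℝ} (hG : Continuous G)
    (hw : HasDerivAt w w' r) : HasDerivAt (fun r ↦ ∫ ℓ in c..w r, G ℓ) (G (w r) * w') r :=
  (integral_hasDerivAt_right (hG.intervalIntegrable _ _) (hG.stronglyMeasurableAtFilter _ _)
    hG.continuousAt).comp r hw

lemma abs_exp_neg_div_le {x y t : ℝ} (hx : 0 ≤ x) (ht : 0 < t) (hy : t / 2 ≤ |y|) :
    |Real.exp (-x) / y| ≤ 2 / t := by
  rw [abs_div, Real.abs_exp, div_le_div_iff₀ (by linarith) ht]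
  nlinarith [Real.exp_le_one_iff.2 (neg_nonpos.2 hx), Real.exp_pos (-x)]

theorem sheared_integral_bound_general
    (t σ C' K : ℝ) (ht : 0 < t) (hC' : 0 ≤ C') (hK : 0 ≤ K)
    (v τ w : ℝ → ℝ) (G : ℝ → ℝ)
    (hv : ∀ r ∈ Set.Icc (0:ℝ) σ, DifferentiableAt ℝ v r)
    (hv_lb : ∀ r ∈ Set.Icc (0:ℝ) σ, t / 2 ≤ |v r|)
    (hv' : ∀ r ∈ Set.Icc (0:ℝ) σ,
      |deriv (fun r' => Real.exp (-r') / v r') r| ≤ C' / t)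
    (hτ : ContinuousOn τ (Set.Icc (0:ℝ) σ))
    (hτ_pos : ∀ r ∈ Set.Icc (0:ℝ) σ, 0 < τ r)
    (hw : ∀ r ∈ Set.Icc (0:ℝ) σ, HasDerivAt w (Real.exp r * v r / τ r) r)
    (hG : Continuous G)
    (hGK : ∀ r ∈ Set.Icc (0:ℝ) σ, |∫ ℓ in (w 0)..(w r), G ℓ| ≤ K) :
    ∀ s ∈ Set.Icc (0:ℝ) σ,
      |∫ r in (0:ℝ)..s, G (w r) / τ r| ≤ (2 + σ * C') * K / t := by
  rintro s ⟨hs0, hsσ⟩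
  have hsub : Icc 0 s ⊆ Icc 0 σ := Icc_subset_Icc_right hsσ
  have hv_ne : ∀ r ∈ Icc 0 σ, v r ≠ 0 := fun r hr hvr ↦ by
    linarith [hv_lb r hr, abs_eq_zero.2 hvr]
  have hv_cont : ContinuousOn v (Icc 0 σ) := fun r hr ↦ (hv r hr).continuousAt.continuousWithinAt
  have hw_cont : ContinuousOn w (Icc 0 σ) := fun r hr ↦ (hw r hr).continuousAt.continuousWithinAt
  have hF'_cont : ContinuousOn (fun r ↦ G (w r) * (Real.exp r * v r / τ r)) (Icc 0 σ) :=
    (hG.comp_continuousOn hw_cont).mul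
      ((Real.continuous_exp.continuousOn.mul hv_cont).div hτ fun r hr ↦ (hτ_pos r hr).ne')
  have hintegrand : ∫ r in (0:ℝ)..s, G (w r) / τ r
      = ∫ r in (0:ℝ)..s, Real.exp (-r) / v r * (G (w r) * (Real.exp r * v r / τ r)) := by
    refine integral_congr fun r hr ↦ ?_
    have hvr := hv_ne r (hsub (uIcc_of_le hs0 ▸ hr))
    simp only [Real.exp_neg]
    field_simp
  have hbound := abs_integral_mul_deriv_le (p := fun r ↦ Real.exp (-r) / v r) hs0
    (fun r hr ↦ (Real.differentiable_exp.comp differentiable_neg).differentiableAt.div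
      (hv r (hsub hr)) (hv_ne r (hsub hr)))
    (fun r hr ↦ hasDerivAt_integral_comp (c := w 0) hG (hw r (hsub hr)))
    ((hF'_cont.mono hsub).intervalIntegrable_of_Icc hs0) integral_same
    (abs_exp_neg_div_le hs0 ht (hv_lb s (hsub (right_mem_Icc.2 hs0))))
    (fun r hr ↦ hv' r (hsub hr)) (fun r hr ↦ hGK r (hsub hr))
  rw [hintegrand]
  calc _ ≤ 2 / t * K + (s - 0) * (C' / t * K) := hbound
    _ ≤ 2 / t * K + σ * (C' / t * K) := by gcongr; linarith
    _ = (2 + σ * C') * K / t := by ring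

/-- (Key quantitative estimate in the proof of Proposition 5.3.) If on
`[0,σ]` one has `|v| ≥ t/2`, `|d/dr(e^{-r}/v(r))| ≤ C'/t`, `τ` continuous positive, `w`
with `w' = e^r v/τ`, and `G` continuous with `|∫_{w(0)}^{w(r)} G| ≤ K`, then for every
`s ∈ [0,σ]`: `|∫₀^s G(w(r))/τ(r) dr| ≤ (2 + σ C') K / t`. -/
theorem sheared_integral_bound
    (t σ C' K : ℝ) (ht : 0 < t) (hσ : 0 < σ) (hC' : 0 ≤ C') (hK : 0 ≤ K)
    (v τ w : ℝ → ℝ) (G : ℝ → ℝ)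
    (hv : ∀ r ∈ Set.Icc (0:ℝ) σ, DifferentiableAt ℝ v r)
    (hv_lb : ∀ r ∈ Set.Icc (0:ℝ) σ, t / 2 ≤ |v r|)
    (hv' : ∀ r ∈ Set.Icc (0:ℝ) σ,
      |deriv (fun r' => Real.exp (-r') / v r') r| ≤ C' / t)
    (hτ : ContinuousOn τ (Set.Icc (0:ℝ) σ))
    (hτ_pos : ∀ r ∈ Set.Icc (0:ℝ) σ, 0 < τ r)
    (hw : ∀ r ∈ Set.Icc (0:ℝ) σ, HasDerivAt w (Real.exp r * v r / τ r) r)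
    (hG : Continuous G)
    (hGK : ∀ r ∈ Set.Icc (0:ℝ) σ, |∫ ℓ in (w 0)..(w r), G ℓ| ≤ K) :
    ∀ s ∈ Set.Icc (0:ℝ) σ,
      |∫ r in (0:ℝ)..s, G (w r) / τ r| ≤ (2 + σ * C') * K / t :=
  sheared_integral_bound_general t σ C' K ht hC' hK v τ w G hv hv_lb hv' hτ hτ_pos hw hG hGK
end
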